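/- arXiv:1204.5702 — 9 statements merged into one kernel-verified Lean document; each statement's English description precedes it below -/
import Mathlib

section
/- Let G be a graph with a B1-EPG representation (each vertex represented by a path with at most one bend on a rectangular grid, with adjacency meaning sharing a grid edge). Then every maximal clique of G corresponds either to an edge-clique (all paths of the clique share a common grid edge) or to a claw-clique (there is a grid point with three incident grid edges such that each path of the clique contains exactly two of these three edges). -/
/-- A grid edge: `(true, x, y)` is the vertical edge from `(x,y)` to `(x,y+1)`;
`(false, x, y)` is the horizontal edge from `(x,y)` to `(x+1,y)`. -/
abbrev GridEdge := Bool × ℤ × ℤ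

/-- A single-bend (B1) path on the grid: bend-point `(x,y)`, a vertical arm of
length `h` (upwards if `vUp`, else downwards) and a horizontal arm of length `w`
(rightwards if `hRight`, else leftwards). -/
structure BendPath where
  x : ℤ
  y : ℤ
  h : ℕ
  w : ℕ
  vUp : Bool
  hRight : Bool
  nontriv : 0 < h + w

namespace BendPath

def vertEdges (p : BendPath) : Set GridEdge :=
  {e | ∃ i : ℕ, i < p.h ∧ e = (true, p.x, if p.vUp then p.y + i else p.y - 1 - i)}

def horizEdges (p : BendPath) : Set GridEdge :=
  {e | ∃ i : ℕ, i < p.w ∧ e = (false, (if p.hRight then p.x + i else p.x - 1 - i), p.y)}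

def edges (p : BendPath) : Set GridEdge := p.vertEdges ∪ p.horizEdges

/-- shape ⌞ : vertical up, horizontal right -/
def isL (p : BendPath) : Prop := p.vUp = true ∧ p.hRight = true
/-- shape ⌟ : vertical up, horizontal left -/
def isJ (p : BendPath) : Prop := p.vUp = true ∧ p.hRight = false
/-- shape ⌝ : vertical down, horizontal left -/
def isN (p : BendPath) : Prop := p.vUp = false ∧ p.hRight = false
/-- shape ⌜ : vertical down, horizontal right -/
def isGamma (p : BendPath) : Prop := p.vUp = false ∧ p.hRight = true

end BendPath

def edgeEndpoints (e : GridEdge) : Set (ℤ × ℤ) :=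
  if e.1 then {(e.2.1, e.2.2), (e.2.1, e.2.2 + 1)} else {(e.2.1, e.2.2), (e.2.1 + 1, e.2.2)}

def BendPath.points (p : BendPath) : Set (ℤ × ℤ) := ⋃ e ∈ p.edges, edgeEndpoints e

def SharesEdge (p q : BendPath) : Prop := ∃ e, e ∈ p.edges ∧ e ∈ q.edges


namespace B1Aux
open Classical

/-! ### Interval description of the edge sets -/

def vLo (p : BendPath) : ℤ := if p.vUp then p.y else p.y - p.h
def vHi (p : BendPath) : ℤ := if p.vUp then p.y + p.h else p.y
def hLo (p : BendPath) : ℤ := if p.hRight then p.x else p.x - p.w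
def hHi (p : BendPath) : ℤ := if p.hRight then p.x + p.w else p.x

lemma vb (p : BendPath) :
    (vLo p = p.y ∧ vHi p = p.y + p.h) ∨ (vLo p = p.y - p.h ∧ vHi p = p.y) := by
  unfold vLo vHi; cases p.vUp <;> simp

lemma hb (p : BendPath) :
    (hLo p = p.x ∧ hHi p = p.x + p.w) ∨ (hLo p = p.x - p.w ∧ hHi p = p.x) := by
  unfold hLo hHi; cases p.hRight <;> simp

lemma mem_edges_iff (p : BendPath) (e : GridEdge) :
    e ∈ p.edges ↔
      (e.1 = true ∧ e.2.1 = p.x ∧ vLo p ≤ e.2.2 ∧ e.2.2 < vHi p) ∨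
      (e.1 = false ∧ e.2.2 = p.y ∧ hLo p ≤ e.2.1 ∧ e.2.1 < hHi p) := by
  obtain ⟨b, ex, ey⟩ := e
  simp only [BendPath.edges, BendPath.vertEdges, BendPath.horizEdges, Set.mem_union,
    Set.mem_setOf_eq, Prod.mk.injEq]
  constructor
  · rintro (⟨i, hi, hbb, hxx, hyy⟩ | ⟨i, hi, hbb, hxx, hyy⟩)
    · left
      refine ⟨hbb, hxx, ?_⟩
      cases hv : p.vUp <;> rw [hv] at hyy <;> simp at hyy <;> simp [vLo, vHi, hv] <;> omega
    · right
      refine ⟨hbb, hyy, ?_⟩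
      cases hv : p.hRight <;> rw [hv] at hxx <;> simp at hxx <;> simp [hLo, hHi, hv] <;> omega
  · rintro (⟨hbb, hxx, h1, h2⟩ | ⟨hbb, hyy, h1, h2⟩)
    · left
      cases hv : p.vUp <;> simp [vLo, vHi, hv] at h1 h2
      · exact ⟨(p.y - 1 - ey).toNat, by omega, hbb, hxx, by simp [hv]; omega⟩
      · exact ⟨(ey - p.y).toNat, by omega, hbb, hxx, by simp [hv]; omega⟩
    · right
      cases hv : p.hRight <;> simp [hLo, hHi, hv] at h1 h2
      · exact ⟨(p.x - 1 - ex).toNat, by omega, hbb, by simp [hv]; omega, hyy⟩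
      · exact ⟨(ex - p.x).toNat, by omega, hbb, by simp [hv]; omega, hyy⟩

def Vrel (p q : BendPath) : Prop :=
  p.x = q.x ∧ ∃ t, vLo p ≤ t ∧ t < vHi p ∧ vLo q ≤ t ∧ t < vHi q

def Hrel (p q : BendPath) : Prop :=
  p.y = q.y ∧ ∃ t, hLo p ≤ t ∧ t < hHi p ∧ hLo q ≤ t ∧ t < hHi q

lemma shares_iff (p q : BendPath) : SharesEdge p q ↔ Vrel p q ∨ Hrel p q := by
  constructor
  · rintro ⟨e, he1, he2⟩
    rw [mem_edges_iff] at he1 he2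
    rcases he1 with ⟨hb1, h1, h2, h3⟩ | ⟨hb1, h1, h2, h3⟩ <;>
      rcases he2 with ⟨hb2, g1, g2, g3⟩ | ⟨hb2, g1, g2, g3⟩
    · exact Or.inl ⟨h1.symm.trans g1, e.2.2, h2, h3, g2, g3⟩
    · rw [hb1] at hb2; cases hb2
    · rw [hb2] at hb1; cases hb1
    · exact Or.inr ⟨h1.symm.trans g1, e.2.1, h2, h3, g2, g3⟩
  · rintro (⟨hx, t, h1, h2, h3, h4⟩ | ⟨hy, t, h1, h2, h3, h4⟩)
    · exact ⟨(true, p.x, t), (mem_edges_iff _ _).2 (Or.inl ⟨rfl, rfl, h1, h2⟩),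
        (mem_edges_iff _ _).2 (Or.inl ⟨rfl, hx, h3, h4⟩)⟩
    · exact ⟨(false, t, p.y), (mem_edges_iff _ _).2 (Or.inr ⟨rfl, rfl, h1, h2⟩),
        (mem_edges_iff _ _).2 (Or.inr ⟨rfl, hy, h3, h4⟩)⟩

lemma shares_self (p : BendPath) : SharesEdge p p := by
  rw [shares_iff]
  have := p.nontriv
  rcases vb p with ⟨h1, h2⟩ | ⟨h1, h2⟩ <;> rcases hb p with ⟨g1, g2⟩ | ⟨g1, g2⟩ <;>
    by_cases hh : 0 < p.h
  all_goals first
    | (left; exact ⟨rfl, vLo p, by omega, by omega, by omega, by omega⟩)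
    | (right; exact ⟨rfl, hLo p, by omega, by omega, by omega, by omega⟩)


/-! ### Helly property for integer intervals -/

lemma int_helly {α : Type*} (K : Set α) (lo hi : α → ℤ) {v0 : α} (hv0 : v0 ∈ K)
    (h : ∀ u ∈ K, ∀ v ∈ K, ∃ t, lo u ≤ t ∧ t < hi u ∧ lo v ≤ t ∧ t < hi v) :
    ∃ z, ∀ v ∈ K, lo v ≤ z ∧ z < hi v := by
  have hbdd : ∃ b : ℤ, ∀ z : ℤ, (∃ v ∈ K, lo v = z) → z ≤ b := by
    refine ⟨hi v0 - 1, ?_⟩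
    rintro z ⟨v, hv, rfl⟩
    obtain ⟨t, h1, h2, h3, h4⟩ := h v hv v0 hv0
    omega
  have hne : ∃ z : ℤ, ∃ v ∈ K, lo v = z := ⟨lo v0, v0, hv0, rfl⟩
  obtain ⟨z, ⟨v1, hv1, hz⟩, hmax⟩ := Int.exists_greatest_of_bdd hbdd hne
  refine ⟨z, fun v hv => ⟨hmax _ ⟨v, hv, rfl⟩, ?_⟩⟩
  obtain ⟨t, h1, h2, h3, h4⟩ := h v1 hv1 v hv
  omega

/-! ### The structure lemma -/

/-- `M p X Y` : the path `p` contains at least two of the four grid edges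
incident to the point `(X, Y)`. -/
def M (p : BendPath) (X Y : ℤ) : Prop :=
  (p.x = X ∧ vLo p ≤ Y - 1 ∧ Y < vHi p) ∨
  (p.y = Y ∧ hLo p ≤ X - 1 ∧ X < hHi p) ∨
  (p.x = X ∧ p.y = Y ∧ vLo p < vHi p ∧ hLo p < hHi p)

lemma sandwich (c d p : BendPath) (Y : ℤ) (hcy : c.y = Y) (hdy : d.y = Y)
    (hx1 : p.x = c.x) (hx2 : p.x = d.x) (hdisj : ¬ Vrel c d)
    (hpc : ∃ t, vLo p ≤ t ∧ t < vHi p ∧ vLo c ≤ t ∧ t < vHi c)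
    (hpd : ∃ t, vLo p ≤ t ∧ t < vHi p ∧ vLo d ≤ t ∧ t < vHi d) :
    vLo p ≤ Y - 1 ∧ Y < vHi p := by
  obtain ⟨t2, a1, a2, a3, a4⟩ := hpc
  obtain ⟨t3, b1, b2, b3, b4⟩ := hpd
  have hcd : c.x = d.x := by omega
  rcases vb c with ⟨c1, c2⟩ | ⟨c1, c2⟩ <;> rcases vb d with ⟨d1, d2⟩ | ⟨d1, d2⟩
  · exact absurd ⟨hcd, Y, by omega, by omega, by omega, by omega⟩ hdisj
  · omega
  · omega
  · exact absurd ⟨hcd, Y - 1, by omega, by omega, by omega, by omega⟩ hdisj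

lemma innerM (c d p : BendPath) (X : ℤ) (hcd : Hrel c d) (hcd' : ¬ Vrel c d)
    (hpc : Vrel p c ∨ Hrel p c) (hpd : Vrel p d ∨ Hrel p d)
    (hVp : vLo p < vHi p) (hpx : p.x = X) :
    M p X c.y := by
  obtain ⟨hycd, s0, _⟩ := hcd
  rcases hpc with ⟨hx1, hov1⟩ | ⟨hy1, s1, s1a, s1b, s1c, s1d⟩
  · rcases hpd with ⟨hx2, hov2⟩ | ⟨hy2, s2, s2a, s2b, s2c, s2d⟩
    · exact Or.inl ⟨hpx, sandwich c d p c.y rfl hycd.symm hx1 hx2 hcd' hov1 hov2⟩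
    · exact Or.inr (Or.inr ⟨hpx, by omega, hVp, by omega⟩)
  · exact Or.inr (Or.inr ⟨hpx, by omega, hVp, by omega⟩)

lemma mainM (a b c d p : BendPath)
    (hab : Vrel a b) (hab' : ¬ Hrel a b)
    (hcd : Hrel c d) (hcd' : ¬ Vrel c d)
    (hpa : SharesEdge p a) (hpb : SharesEdge p b)
    (hpc : SharesEdge p c) (hpd : SharesEdge p d)
    (hac : SharesEdge a c) :
    M p a.x c.y := by
  rw [shares_iff] at hpa hpb hpc hpd hac
  obtain ⟨hxab, tab, _⟩ := hab
  obtain ⟨hycd, s0, _⟩ := hcd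
  rcases hpa with ⟨hx_pa, t1, t1a, t1b, t1c, t1d⟩ | ⟨hy_pa, s1, s1a, s1b, s1c, s1d⟩
  · exact innerM c d p a.x ⟨hycd, s0, by assumption⟩ hcd' hpc hpd (by omega) hx_pa
  · rcases hpb with ⟨hx_pb, t1, t1a, t1b, t1c, t1d⟩ | ⟨hy_pb, s2, s2a, s2b, s2c, s2d⟩
    · exact innerM c d p a.x ⟨hycd, s0, by assumption⟩ hcd' hpc hpd (by omega) (by omega)
    · -- p meets a and b horizontally : H_p contains {a.x - 1, a.x}
      have hyab : a.y = b.y := by omega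
      have hdisjH : ¬ (∃ t, hLo a ≤ t ∧ t < hHi a ∧ hLo b ≤ t ∧ t < hHi b) :=
        fun ⟨t, ht⟩ => hab' ⟨hyab, t, ht⟩
      have hHp : hLo p ≤ a.x - 1 ∧ a.x < hHi p := by
        rcases hb a with ⟨a1, a2⟩ | ⟨a1, a2⟩ <;> rcases hb b with ⟨b1, b2⟩ | ⟨b1, b2⟩
        · exact absurd ⟨a.x, by omega, by omega, by omega, by omega⟩ hdisjH
        · omega
        · omega
        · exact absurd ⟨a.x - 1, by omega, by omega, by omega, by omega⟩ hdisjH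
      rcases hpc with ⟨hx_pc, t2, t2a, t2b, t2c, t2d⟩ | ⟨hy_pc, s3, s3a, s3b, s3c, s3d⟩
      · rcases hpd with ⟨hx_pd, t3, t3a, t3b, t3c, t3d⟩ | ⟨hy_pd, s4, s4a, s4b, s4c, s4d⟩
        · by_cases hyp : p.y = c.y
          · exact Or.inr (Or.inl ⟨hyp, by omega, by omega⟩)
          · have hVp := sandwich c d p c.y rfl hycd.symm hx_pc hx_pd hcd'
              ⟨t2, t2a, t2b, t2c, t2d⟩ ⟨t3, t3a, t3b, t3c, t3d⟩
            rcases hac with ⟨hx_ac, _⟩ | ⟨hy_ac, _⟩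
            · exact Or.inl ⟨by omega, hVp⟩
            · omega
        · exact Or.inr (Or.inl ⟨by omega, by omega, by omega⟩)
      · exact Or.inr (Or.inl ⟨by omega, by omega, by omega⟩)


/-! ### The four edges at a grid point -/

def edgeAt (X Y : ℤ) : Fin 4 → GridEdge :=
  ![(true, X, Y), (true, X, Y - 1), (false, X, Y), (false, X - 1, Y)]

lemma memU (p : BendPath) {X Y : ℤ} (h1 : p.x = X) (h2 : vLo p ≤ Y) (h3 : Y < vHi p) :
    edgeAt X Y 0 ∈ p.edges := by
  have : ((true, X, Y) : GridEdge) ∈ p.edges :=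
    (mem_edges_iff _ _).2 (Or.inl ⟨rfl, h1.symm, h2, h3⟩)
  simpa [edgeAt] using this

lemma memD (p : BendPath) {X Y : ℤ} (h1 : p.x = X) (h2 : vLo p ≤ Y - 1) (h3 : Y - 1 < vHi p) :
    edgeAt X Y 1 ∈ p.edges := by
  have : ((true, X, Y - 1) : GridEdge) ∈ p.edges :=
    (mem_edges_iff _ _).2 (Or.inl ⟨rfl, h1.symm, h2, h3⟩)
  simpa [edgeAt] using this

lemma memR (p : BendPath) {X Y : ℤ} (h1 : p.y = Y) (h2 : hLo p ≤ X) (h3 : X < hHi p) :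
    edgeAt X Y 2 ∈ p.edges := by
  have : ((false, X, Y) : GridEdge) ∈ p.edges :=
    (mem_edges_iff _ _).2 (Or.inr ⟨rfl, h1.symm, h2, h3⟩)
  simpa [edgeAt] using this

lemma memL (p : BendPath) {X Y : ℤ} (h1 : p.y = Y) (h2 : hLo p ≤ X - 1) (h3 : X - 1 < hHi p) :
    edgeAt X Y 3 ∈ p.edges := by
  have : ((false, X - 1, Y) : GridEdge) ∈ p.edges :=
    (mem_edges_iff _ _).2 (Or.inr ⟨rfl, h1.symm, h2, h3⟩)
  simpa [edgeAt] using this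

lemma edgeAt_inj (X Y : ℤ) {k l : Fin 4} (h : edgeAt X Y k = edgeAt X Y l) : k = l := by
  fin_cases k <;> fin_cases l <;> simp_all [edgeAt, Prod.ext_iff] <;> omega

lemma pt_mem (X Y : ℤ) (k : Fin 4) : (X, Y) ∈ edgeEndpoints (edgeAt X Y k) := by
  fin_cases k <;> simp [edgeAt, edgeEndpoints, Prod.ext_iff] <;> omega

/-- A path containing at least two of the four edges at `(X,Y)` contains
exactly two of them. -/
lemma pattern_exists (p : BendPath) (X Y : ℤ) (hM : M p X Y) :
    ∃ i j : Fin 4, i ≠ j ∧ ∀ k : Fin 4, (edgeAt X Y k ∈ p.edges ↔ k = i ∨ k = j) := by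
  rcases hM with ⟨hx, h1, h2⟩ | ⟨hy, h1, h2⟩ | ⟨hx, hy, h1, h2⟩
  · have hyp : p.y ≠ Y := by rcases vb p with ⟨e1, e2⟩ | ⟨e1, e2⟩ <;> omega
    refine ⟨0, 1, by decide, fun k => ?_⟩
    fin_cases k <;> simp [edgeAt, mem_edges_iff] <;> omega
  · have hxp : p.x ≠ X := by rcases hb p with ⟨e1, e2⟩ | ⟨e1, e2⟩ <;> omega
    refine ⟨2, 3, by decide, fun k => ?_⟩
    fin_cases k <;> simp [edgeAt, mem_edges_iff] <;> omega
  · rcases vb p with ⟨e1, e2⟩ | ⟨e1, e2⟩ <;> rcases hb p with ⟨f1, f2⟩ | ⟨f1, f2⟩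
    · exact ⟨0, 2, by decide, fun k => by fin_cases k <;> simp [edgeAt, mem_edges_iff] <;> omega⟩
    · exact ⟨0, 3, by decide, fun k => by fin_cases k <;> simp [edgeAt, mem_edges_iff] <;> omega⟩
    · exact ⟨1, 2, by decide, fun k => by fin_cases k <;> simp [edgeAt, mem_edges_iff] <;> omega⟩
    · exact ⟨1, 3, by decide, fun k => by fin_cases k <;> simp [edgeAt, mem_edges_iff] <;> omega⟩

/-- Two paths with the `M` property that share a grid edge share one of the
four edges at `(X,Y)`. -/
lemma common_dir (p q : BendPath) (X Y : ℤ) (hp : M p X Y) (hq : M q X Y)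
    (hs : SharesEdge p q) :
    ∃ k : Fin 4, edgeAt X Y k ∈ p.edges ∧ edgeAt X Y k ∈ q.edges := by
  rw [shares_iff] at hs
  rcases hp with ⟨px, p1, p2⟩ | ⟨py, p1, p2⟩ | ⟨px, py, p1, p2⟩ <;>
    rcases hq with ⟨qx, q1, q2⟩ | ⟨qy, q1, q2⟩ | ⟨qx, qy, q1, q2⟩
  · exact ⟨0, memU p px (by omega) p2, memU q qx (by omega) q2⟩
  · exfalso
    rcases hs with ⟨hxx, t, o1, o2, o3, o4⟩ | ⟨hyy, t, o1, o2, o3, o4⟩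
    · rcases hb q with ⟨f1, f2⟩ | ⟨f1, f2⟩ <;> omega
    · rcases vb p with ⟨e1, e2⟩ | ⟨e1, e2⟩ <;> omega
  · rcases vb q with ⟨e1, e2⟩ | ⟨e1, e2⟩
    · exact ⟨0, memU p px (by omega) p2, memU q qx (by omega) (by omega)⟩
    · exact ⟨1, memD p px p1 (by omega), memD q qx (by omega) (by omega)⟩
  · exfalso
    rcases hs with ⟨hxx, t, o1, o2, o3, o4⟩ | ⟨hyy, t, o1, o2, o3, o4⟩
    · rcases hb p with ⟨f1, f2⟩ | ⟨f1, f2⟩ <;> omega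
    · rcases vb q with ⟨e1, e2⟩ | ⟨e1, e2⟩ <;> omega
  · exact ⟨2, memR p py (by omega) p2, memR q qy (by omega) q2⟩
  · rcases hb q with ⟨f1, f2⟩ | ⟨f1, f2⟩
    · exact ⟨2, memR p py (by omega) p2, memR q qy (by omega) (by omega)⟩
    · exact ⟨3, memL p py p1 (by omega), memL q qy (by omega) (by omega)⟩
  · rcases vb p with ⟨e1, e2⟩ | ⟨e1, e2⟩
    · exact ⟨0, memU p px (by omega) (by omega), memU q qx (by omega) q2⟩
    · exact ⟨1, memD p px (by omega) (by omega), memD q qx q1 (by omega)⟩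
  · rcases hb p with ⟨f1, f2⟩ | ⟨f1, f2⟩
    · exact ⟨2, memR p py (by omega) (by omega), memR q qy (by omega) q2⟩
    · exact ⟨3, memL p py (by omega) (by omega), memL q qy q1 (by omega)⟩
  · rcases hs with ⟨hxx, t, o1, o2, o3, o4⟩ | ⟨hyy, t, o1, o2, o3, o4⟩
    · rcases vb p with ⟨e1, e2⟩ | ⟨e1, e2⟩ <;> rcases vb q with ⟨f1, f2⟩ | ⟨f1, f2⟩
      · exact ⟨0, memU p px (by omega) (by omega), memU q qx (by omega) (by omega)⟩
      · exact absurd rfl (by omega : ¬ (0:ℤ) = 0)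
      · exact absurd rfl (by omega : ¬ (0:ℤ) = 0)
      · exact ⟨1, memD p px (by omega) (by omega), memD q qx (by omega) (by omega)⟩
    · rcases hb p with ⟨f1, f2⟩ | ⟨f1, f2⟩ <;> rcases hb q with ⟨g1, g2⟩ | ⟨g1, g2⟩
      · exact ⟨2, memR p py (by omega) (by omega), memR q qy (by omega) (by omega)⟩
      · exact absurd rfl (by omega : ¬ (0:ℤ) = 0)
      · exact absurd rfl (by omega : ¬ (0:ℤ) = 0)
      · exact ⟨3, memL p py (by omega) (by omega), memL q qy (by omega) (by omega)⟩

/-! ### Combinatorics of pairwise intersecting 2-subsets of a 4-set -/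

lemma pair_cover {x y a b : Fin 4} (hx : x = a ∨ x = b) (hy : y = a ∨ y = b) (hxy : x ≠ y) :
    ∀ z : Fin 4, (z = a ∨ z = b) → z = x ∨ z = y := by
  intro z hz
  rcases hx with rfl | rfl <;> rcases hy with rfl | rfl <;> tauto

lemma fin4_complete : ∀ d1 d2 d3 m z : Fin 4, d1 ≠ d2 → d1 ≠ d3 → d2 ≠ d3 →
    m ≠ d1 → m ≠ d2 → m ≠ d3 → z = d1 ∨ z = d2 ∨ z = d3 ∨ z = m := by decide

lemma fin4_fourth : ∀ a b c : Fin 4, a ≠ b → a ≠ c → b ≠ c →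
    ∃ d : Fin 4, d ≠ a ∧ d ≠ b ∧ d ≠ c := by decide

lemma fin4_triangle {α : Sort*} (i j : α → Fin 4) (hij : ∀ v, i v ≠ j v)
    (hint : ∀ u v, ∃ k, (k = i u ∨ k = j u) ∧ (k = i v ∨ k = j v))
    (hcont : ∀ m : Fin 4, ∃ v, m = i v ∨ m = j v)
    (hmiss : ∀ m : Fin 4, ∃ v, m ≠ i v ∧ m ≠ j v) : False := by
  obtain ⟨m0, hm0⟩ := hmiss 0
  obtain ⟨q0, hq0⟩ := hcont 0
  obtain ⟨A, hA1, hA2⟩ := hint q0 m0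
  have hA0 : A ≠ 0 := by rintro rfl; tauto
  obtain ⟨mA, hmA⟩ := hmiss A
  obtain ⟨k1, hk11, hk12⟩ := hint mA q0
  have hcov0 : ∀ z : Fin 4, (z = i q0 ∨ z = j q0) → z = 0 ∨ z = A :=
    pair_cover hq0 hA1 (Ne.symm hA0)
  have hk10 : k1 = 0 := by
    rcases hcov0 k1 hk12 with h | rfl
    · exact h
    · exact absurd hk11 (by tauto)
  have h0mA : (0 : Fin 4) = i mA ∨ (0 : Fin 4) = j mA := hk10 ▸ hk11
  obtain ⟨G, hG1, hG2⟩ := hint mA m0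
  have hG0 : G ≠ 0 := by rintro rfl; tauto
  have hGA : G ≠ A := by rintro rfl; tauto
  have hcovA : ∀ z : Fin 4, (z = i mA ∨ z = j mA) → z = 0 ∨ z = G :=
    pair_cover h0mA hG1 (Ne.symm hG0)
  have hcovm : ∀ z : Fin 4, (z = i m0 ∨ z = j m0) → z = A ∨ z = G :=
    pair_cover hA2 hG2 (Ne.symm hGA)
  obtain ⟨D, hD0, hDA, hDG⟩ := fin4_fourth 0 A G (Ne.symm hA0) (Ne.symm hG0) hGA.symm
  obtain ⟨qD, hqD⟩ := hcont D
  have key : ∀ z w : Fin 4, (z = i qD ∨ z = j qD) → (w = i qD ∨ w = j qD) →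
      z ≠ D → w ≠ D → z = w := by
    intro z w hz hw hzD hwD
    rcases hqD with rfl | rfl <;> rcases hz with rfl | rfl <;> rcases hw with rfl | rfl <;>
      first
        | rfl
        | exact absurd rfl hzD
        | exact absurd rfl hwD
  obtain ⟨e1, he11, he12⟩ := hint qD q0
  obtain ⟨e2, he21, he22⟩ := hint qD mA
  obtain ⟨e3, he31, he32⟩ := hint qD m0
  have hD1 : e1 ≠ D := by rcases hcov0 e1 he12 with rfl | rfl; exacts [Ne.symm hD0, Ne.symm hDA]
  have hD2 : e2 ≠ D := by rcases hcovA e2 he22 with rfl | rfl; exacts [Ne.symm hD0, Ne.symm hDG]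
  have hD3 : e3 ≠ D := by rcases hcovm e3 he32 with rfl | rfl; exacts [Ne.symm hDA, Ne.symm hDG]
  have h12 : e1 = e2 := key _ _ he11 he21 hD1 hD2
  have h13 : e1 = e3 := key _ _ he11 he31 hD1 hD3
  rcases hcov0 e1 he12 with rfl | rfl
  · rcases hcovm e3 he32 with h | h
    · exact hA0 ((h13.trans h).symm)
    · exact hG0 ((h13.trans h).symm)
  · rcases hcovA e2 he22 with h | h
    · exact hA0 (h12.trans h)
    · exact hGA ((h12.trans h).symm)

/-! ### Building the claw -/

lemma claw_case {V : Type*} (P : V → BendPath) (K : Set V) (X Y : ℤ)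
    (i j : {v // v ∈ K} → Fin 4) (hij : ∀ s, i s ≠ j s)
    (hchar : ∀ s k, edgeAt X Y k ∈ (P s.1).edges ↔ k = i s ∨ k = j s)
    (m d1 d2 d3 : Fin 4)
    (hd12 : d1 ≠ d2) (hd13 : d1 ≠ d3) (hd23 : d2 ≠ d3)
    (hmd1 : m ≠ d1) (hmd2 : m ≠ d2) (hmd3 : m ≠ d3)
    (hm : ∀ s, m ≠ i s ∧ m ≠ j s) :
    ∃ (pt : ℤ × ℤ) (e1 e2 e3 : GridEdge), e1 ≠ e2 ∧ e1 ≠ e3 ∧ e2 ≠ e3 ∧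
      pt ∈ edgeEndpoints e1 ∧ pt ∈ edgeEndpoints e2 ∧ pt ∈ edgeEndpoints e3 ∧
      ∀ v ∈ K,
        (e1 ∈ (P v).edges ∧ e2 ∈ (P v).edges ∧ e3 ∉ (P v).edges) ∨
        (e1 ∈ (P v).edges ∧ e3 ∈ (P v).edges ∧ e2 ∉ (P v).edges) ∨
        (e2 ∈ (P v).edges ∧ e3 ∈ (P v).edges ∧ e1 ∉ (P v).edges) := by
  refine ⟨(X, Y), edgeAt X Y d1, edgeAt X Y d2, edgeAt X Y d3,
    fun h => hd12 (edgeAt_inj X Y h), fun h => hd13 (edgeAt_inj X Y h),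
    fun h => hd23 (edgeAt_inj X Y h),
    pt_mem X Y d1, pt_mem X Y d2, pt_mem X Y d3, ?_⟩
  intro v hv
  set s : {v // v ∈ K} := ⟨v, hv⟩ with hs_def
  have hs := hchar s
  have mem : ∀ k, i s = k → edgeAt X Y k ∈ (P v).edges := fun k hk => (hs k).2 (Or.inl hk.symm)
  have mem' : ∀ k, j s = k → edgeAt X Y k ∈ (P v).edges := fun k hk => (hs k).2 (Or.inr hk.symm)
  have nmem : ∀ k, (k = i s → False) → (k = j s → False) → edgeAt X Y k ∉ (P v).edges :=
    fun k h1 h2 hc => ((hs k).1 hc).elim h1 h2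
  have him : i s = m → False := fun e => (hm s).1 e.symm
  have hjm : j s = m → False := fun e => (hm s).2 e.symm
  have hii := fin4_complete d1 d2 d3 m (i s) hd12 hd13 hd23 hmd1 hmd2 hmd3
  have hjj := fin4_complete d1 d2 d3 m (j s) hd12 hd13 hd23 hmd1 hmd2 hmd3
  rcases hii with h | h | h | h <;> rcases hjj with h' | h' | h' | h'
  · exact absurd (h.trans h'.symm) (hij s)
  · exact Or.inl ⟨mem _ h, mem' _ h',
      nmem _ (fun e => hd13 ((e.trans h).symm)) (fun e => hd23 ((e.trans h').symm))⟩
  · exact Or.inr (Or.inl ⟨mem _ h, mem' _ h',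
      nmem _ (fun e => hd12 ((e.trans h).symm)) (fun e => hd23 (e.trans h'))⟩)
  · exact absurd h' hjm
  · exact Or.inl ⟨mem' _ h', mem _ h,
      nmem _ (fun e => hd23 ((e.trans h).symm)) (fun e => hd13 ((e.trans h').symm))⟩
  · exact absurd (h.trans h'.symm) (hij s)
  · exact Or.inr (Or.inr ⟨mem _ h, mem' _ h',
      nmem _ (fun e => hd12 (e.trans h)) (fun e => hd13 (e.trans h'))⟩)
  · exact absurd h' hjm
  · exact Or.inr (Or.inl ⟨mem' _ h', mem _ h,
      nmem _ (fun e => hd23 (e.trans h)) (fun e => hd12 ((e.trans h').symm))⟩)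
  · exact Or.inr (Or.inr ⟨mem' _ h', mem _ h,
      nmem _ (fun e => hd13 (e.trans h)) (fun e => hd12 (e.trans h'))⟩)
  · exact absurd (h.trans h'.symm) (hij s)
  · exact absurd h' hjm
  · exact absurd h him
  · exact absurd h him
  · exact absurd h him
  · exact absurd (h.trans h'.symm) (hij s)

end B1Aux

/-- `P` is an EPG representation of `G` : distinct vertices are adjacent iff
their paths share a grid edge. -/
def IsEPGRep {V : Type*} (G : SimpleGraph V) (P : V → BendPath) : Prop :=
  ∀ u v : V, u ≠ v → (G.Adj u v ↔ SharesEdge (P u) (P v))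

/-- Every maximal clique of a B1-EPG graph is an edge-clique or a claw-clique. -/
theorem maximal_clique_edge_or_claw {V : Type*} (G : SimpleGraph V) (P : V → BendPath)
    (hrep : IsEPGRep G P) (K : Set V) (hK : G.IsClique K)
    (hmax : ∀ K' : Set V, G.IsClique K' → K ⊆ K' → K' = K) :
    (∃ e : GridEdge, ∀ v ∈ K, e ∈ (P v).edges) ∨
    (∃ (pt : ℤ × ℤ) (e1 e2 e3 : GridEdge), e1 ≠ e2 ∧ e1 ≠ e3 ∧ e2 ≠ e3 ∧
      pt ∈ edgeEndpoints e1 ∧ pt ∈ edgeEndpoints e2 ∧ pt ∈ edgeEndpoints e3 ∧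
      ∀ v ∈ K,
        (e1 ∈ (P v).edges ∧ e2 ∈ (P v).edges ∧ e3 ∉ (P v).edges) ∨
        (e1 ∈ (P v).edges ∧ e3 ∈ (P v).edges ∧ e2 ∉ (P v).edges) ∨
        (e2 ∈ (P v).edges ∧ e3 ∈ (P v).edges ∧ e1 ∉ (P v).edges)) := by
  classical
  clear hmax
  have hSh : ∀ u ∈ K, ∀ v ∈ K, SharesEdge (P u) (P v) := by
    intro u hu v hv
    rcases eq_or_ne u v with rfl | huv
    · exact B1Aux.shares_self _
    · exact (hrep u v huv).1 (hK hu hv huv)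
  rcases Set.eq_empty_or_nonempty K with rfl | ⟨v0, hv0⟩
  · exact Or.inl ⟨(true, 0, 0), fun v hv => absurd hv (Set.notMem_empty v)⟩
  by_cases hVonly : ∃ u ∈ K, ∃ v ∈ K, B1Aux.Vrel (P u) (P v) ∧ ¬ B1Aux.Hrel (P u) (P v)
  swap
  · -- every pair of paths shares a horizontal edge : Helly gives a common edge
    push_neg at hVonly
    have hH : ∀ u ∈ K, ∀ v ∈ K, B1Aux.Hrel (P u) (P v) := by
      intro u hu v hv
      rcases (B1Aux.shares_iff _ _).1 (hSh u hu v hv) with h | h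
      · exact hVonly u hu v hv h
      · exact h
    obtain ⟨z, hz⟩ := B1Aux.int_helly K (fun v => B1Aux.hLo (P v)) (fun v => B1Aux.hHi (P v))
      hv0 (fun u hu v hv => (hH u hu v hv).2)
    exact Or.inl ⟨(false, z, (P v0).y), fun v hv => (B1Aux.mem_edges_iff _ _).2
      (Or.inr ⟨rfl, ((hH v hv v0 hv0).1).symm, (hz v hv).1, (hz v hv).2⟩)⟩
  by_cases hHonly : ∃ u ∈ K, ∃ v ∈ K, B1Aux.Hrel (P u) (P v) ∧ ¬ B1Aux.Vrel (P u) (P v)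
  swap
  · -- every pair of paths shares a vertical edge : Helly gives a common edge
    push_neg at hHonly
    have hV : ∀ u ∈ K, ∀ v ∈ K, B1Aux.Vrel (P u) (P v) := by
      intro u hu v hv
      rcases (B1Aux.shares_iff _ _).1 (hSh u hu v hv) with h | h
      · exact h
      · exact hHonly u hu v hv h
    obtain ⟨z, hz⟩ := B1Aux.int_helly K (fun v => B1Aux.vLo (P v)) (fun v => B1Aux.vHi (P v))
      hv0 (fun u hu v hv => (hV u hu v hv).2)
    exact Or.inl ⟨(true, (P v0).x, z), fun v hv => (B1Aux.mem_edges_iff _ _).2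
      (Or.inl ⟨rfl, ((hV v hv v0 hv0).1).symm, (hz v hv).1, (hz v hv).2⟩)⟩
  -- the main case : a vertical-only pair and a horizontal-only pair exist
  obtain ⟨a, ha, b, hb', hab, hab'⟩ := hVonly
  obtain ⟨c, hc, d, hd', hcd, hcd'⟩ := hHonly
  have hM : ∀ v ∈ K, B1Aux.M (P v) (P a).x (P c).y := fun v hv =>
    B1Aux.mainM (P a) (P b) (P c) (P d) (P v) hab hab' hcd hcd'
      (hSh v hv a ha) (hSh v hv b hb') (hSh v hv c hc) (hSh v hv d hd') (hSh a ha c hc)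
  have hpat : ∀ s : {v // v ∈ K}, ∃ i j : Fin 4, i ≠ j ∧
      ∀ k : Fin 4, (B1Aux.edgeAt (P a).x (P c).y k ∈ (P s.1).edges ↔ k = i ∨ k = j) :=
    fun s => B1Aux.pattern_exists _ _ _ (hM s.1 s.2)
  choose i j hij hchar using hpat
  by_cases hU : ∀ s : {v // v ∈ K}, B1Aux.edgeAt (P a).x (P c).y 0 ∈ (P s.1).edges
  · exact Or.inl ⟨_, fun v hv => hU ⟨v, hv⟩⟩
  by_cases hD : ∀ s : {v // v ∈ K}, B1Aux.edgeAt (P a).x (P c).y 1 ∈ (P s.1).edges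
  · exact Or.inl ⟨_, fun v hv => hD ⟨v, hv⟩⟩
  by_cases hR : ∀ s : {v // v ∈ K}, B1Aux.edgeAt (P a).x (P c).y 2 ∈ (P s.1).edges
  · exact Or.inl ⟨_, fun v hv => hR ⟨v, hv⟩⟩
  by_cases hL : ∀ s : {v // v ∈ K}, B1Aux.edgeAt (P a).x (P c).y 3 ∈ (P s.1).edges
  · exact Or.inl ⟨_, fun v hv => hL ⟨v, hv⟩⟩
  by_cases g0 : ∃ s : {v // v ∈ K}, (0 : Fin 4) = i s ∨ (0 : Fin 4) = j s
  swap
  · push_neg at g0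
    exact Or.inr (B1Aux.claw_case P K _ _ i j hij hchar 0 1 2 3
      (by decide) (by decide) (by decide) (by decide) (by decide) (by decide) g0)
  by_cases g1 : ∃ s : {v // v ∈ K}, (1 : Fin 4) = i s ∨ (1 : Fin 4) = j s
  swap
  · push_neg at g1
    exact Or.inr (B1Aux.claw_case P K _ _ i j hij hchar 1 0 2 3
      (by decide) (by decide) (by decide) (by decide) (by decide) (by decide) g1)
  by_cases g2 : ∃ s : {v // v ∈ K}, (2 : Fin 4) = i s ∨ (2 : Fin 4) = j s
  swap
  · push_neg at g2
    exact Or.inr (B1Aux.claw_case P K _ _ i j hij hchar 2 0 1 3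
      (by decide) (by decide) (by decide) (by decide) (by decide) (by decide) g2)
  by_cases g3 : ∃ s : {v // v ∈ K}, (3 : Fin 4) = i s ∨ (3 : Fin 4) = j s
  swap
  · push_neg at g3
    exact Or.inr (B1Aux.claw_case P K _ _ i j hij hchar 3 0 1 2
      (by decide) (by decide) (by decide) (by decide) (by decide) (by decide) g3)
  exfalso
  push_neg at hU hD hR hL
  refine B1Aux.fin4_triangle i j hij ?_ ?_ ?_
  · intro u v
    obtain ⟨k, hk1, hk2⟩ := B1Aux.common_dir (P u.1) (P v.1) (P a).x (P c).y
      (hM u.1 u.2) (hM v.1 v.2) (hSh u.1 u.2 v.1 v.2)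
    exact ⟨k, (hchar u k).1 hk1, (hchar v k).1 hk2⟩
  · intro m
    fin_cases m
    exacts [g0, g1, g2, g3]
  · intro m
    have hmiss : ∀ s : {v // v ∈ K}, B1Aux.edgeAt (P a).x (P c).y m ∉ (P s.1).edges →
        m ≠ i s ∧ m ≠ j s := by
      intro s hns
      constructor <;> intro e <;> exact hns ((hchar s m).2 (by tauto))
    fin_cases m
    · obtain ⟨s, hs⟩ := hU; exact ⟨s, hmiss s hs⟩
    · obtain ⟨s, hs⟩ := hD; exact ⟨s, hmiss s hs⟩
    · obtain ⟨s, hs⟩ := hR; exact ⟨s, hmiss s hs⟩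
    · obtain ⟨s, hs⟩ := hL; exact ⟨s, hmiss s hs⟩
end

section
/- In any [⌞]-representation of the 4-cycle C4 (i.e., a representation where every vertex is an ⌞-shaped single-bend path on the grid), every path has a neighbour sharing a grid edge on its vertical segment and a neighbour sharing a grid edge on its horizontal segment. -/
/-- The chordless 4-cycle a=0, b=1, c=2, d=3. -/
def C4 : SimpleGraph (Fin 4) := SimpleGraph.fromRel (fun i j => j = i + 1)


section AuxC4Lemma

open BendPath

private lemma mem_vert' {p : BendPath} (hp : p.isL) {e : GridEdge} :
    e ∈ p.vertEdges ↔ e.1 = true ∧ e.2.1 = p.x ∧ p.y ≤ e.2.2 ∧ e.2.2 < p.y + p.h := by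
  obtain ⟨h1, _⟩ := hp
  simp only [vertEdges, Set.mem_setOf_eq, h1, if_true]
  constructor
  · rintro ⟨i, hi, rfl⟩
    refine ⟨rfl, rfl, by simp, by simpa using by omega⟩
  · rintro ⟨h₁, h₂, h₃, h₄⟩
    obtain ⟨b, x, y⟩ := e
    simp only at h₁ h₂ h₃ h₄
    subst h₁ h₂
    exact ⟨(y - p.y).toNat, by omega, by simp; omega⟩

private lemma mem_horiz' {p : BendPath} (hp : p.isL) {e : GridEdge} :
    e ∈ p.horizEdges ↔ e.1 = false ∧ e.2.2 = p.y ∧ p.x ≤ e.2.1 ∧ e.2.1 < p.x + p.w := by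
  obtain ⟨_, h2⟩ := hp
  simp only [horizEdges, Set.mem_setOf_eq, h2, if_true]
  constructor
  · rintro ⟨i, hi, rfl⟩
    refine ⟨rfl, rfl, by simp, by simpa using by omega⟩
  · rintro ⟨h₁, h₂, h₃, h₄⟩
    obtain ⟨b, x, y⟩ := e
    simp only at h₁ h₂ h₃ h₄
    subst h₁ h₂
    exact ⟨(x - p.x).toNat, by omega, by simp; omega⟩

/-- quantifier-free "share a vertical edge" -/
private def VS (p q : BendPath) : Prop :=
  p.x = q.x ∧ p.y < p.y + p.h ∧ q.y < q.y + q.h ∧ p.y < q.y + q.h ∧ q.y < p.y + p.h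

/-- quantifier-free "share a horizontal edge" -/
private def HS (p q : BendPath) : Prop :=
  p.y = q.y ∧ p.x < p.x + p.w ∧ q.x < q.x + q.w ∧ p.x < q.x + q.w ∧ q.x < p.x + p.w

private lemma VS_edge {p q : BendPath} (hp : p.isL) (hq : q.isL) (h : VS p q) :
    ∃ e ∈ p.vertEdges, e ∈ q.edges := by
  obtain ⟨hx, h1, h2, h3, h4⟩ := h
  refine ⟨(true, p.x, max p.y q.y), ?_, Or.inl ?_⟩
  · rw [mem_vert' hp]; refine ⟨rfl, rfl, ?_, ?_⟩ <;> · simp; try omega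
  · rw [mem_vert' hq]; refine ⟨rfl, hx ▸ rfl, ?_, ?_⟩ <;> · simp; try omega

private lemma HS_edge {p q : BendPath} (hp : p.isL) (hq : q.isL) (h : HS p q) :
    ∃ e ∈ p.horizEdges, e ∈ q.edges := by
  obtain ⟨hy, h1, h2, h3, h4⟩ := h
  refine ⟨(false, max p.x q.x, p.y), ?_, Or.inr ?_⟩
  · rw [mem_horiz' hp]; refine ⟨rfl, rfl, ?_, ?_⟩ <;> · simp; try omega
  · rw [mem_horiz' hq]; refine ⟨rfl, hy ▸ rfl, ?_, ?_⟩ <;> · simp; try omega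

private lemma shares_iff {p q : BendPath} (hp : p.isL) (hq : q.isL) :
    SharesEdge p q ↔ VS p q ∨ HS p q := by
  constructor
  · rintro ⟨e, hep, heq⟩
    rcases hep with hv | hh <;> rcases heq with hv' | hh'
    · rw [mem_vert' hp] at hv; rw [mem_vert' hq] at hv'
      exact Or.inl ⟨hv.2.1 ▸ hv'.2.1.symm ▸ rfl, by omega, by omega, by omega, by omega⟩
    · rw [mem_vert' hp] at hv; rw [mem_horiz' hq] at hh'
      simp [hv.1] at hh'
    · rw [mem_horiz' hp] at hh; rw [mem_vert' hq] at hv'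
      simp [hh.1] at hv'
    · rw [mem_horiz' hp] at hh; rw [mem_horiz' hq] at hh'
      exact Or.inr ⟨hh.2.1 ▸ hh'.2.1.symm ▸ rfl, by omega, by omega, by omega, by omega⟩
  · rintro (h | h)
    · obtain ⟨e, he, he'⟩ := VS_edge hp hq h
      exact ⟨e, Or.inl he, he'⟩
    · obtain ⟨e, he, he'⟩ := HS_edge hp hq h
      exact ⟨e, Or.inr he, he'⟩

private lemma key {pv pu pw pz : BendPath}
    (svu : VS pv pu ∨ HS pv pu) (svw : VS pv pw ∨ HS pv pw)
    (nuw : ¬ (VS pu pw ∨ HS pu pw))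
    (szu : VS pz pu ∨ HS pz pu) (szw : VS pz pw ∨ HS pz pw)
    (nzv : ¬ (VS pz pv ∨ HS pz pv)) :
    (VS pv pu ∨ VS pv pw) ∧ (HS pv pu ∨ HS pv pw) := by
  rw [not_or] at nuw nzv
  obtain ⟨nuw1, nuw2⟩ := nuw
  obtain ⟨nzv1, nzv2⟩ := nzv
  simp only [VS, HS] at *
  constructor
  · by_contra hc
    rw [not_or] at hc
    obtain ⟨n1, n2⟩ := hc
    have hu := svu.resolve_left n1
    have hw := svw.resolve_left n2
    clear svu svw n1 n2
    rcases szu with zu | zu <;> rcases szw with zw | zw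
    · clear nuw2 nzv1 nzv2; omega
    · clear nuw1 nzv1; omega
    · clear nuw1 nzv1; omega
    · clear nuw1 nzv1; omega
  · by_contra hc
    rw [not_or] at hc
    obtain ⟨n1, n2⟩ := hc
    have hu := svu.resolve_right n1
    have hw := svw.resolve_right n2
    clear svu svw n1 n2
    rcases szu with zu | zu <;> rcases szw with zw | zw
    · clear nuw2 nzv2; omega
    · clear nuw2 nzv2; omega
    · clear nuw2 nzv2; omega
    · clear nuw2 nzv1 nzv2; omega

private lemma adj_facts : ∀ v : Fin 4,
    C4.Adj (v+1) v ∧ C4.Adj (v+3) v ∧ ¬ C4.Adj (v+1) (v+3) ∧ ¬ C4.Adj (v+2) v ∧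
    C4.Adj (v+2) (v+1) ∧ C4.Adj (v+2) (v+3) ∧
    (v+1 : Fin 4) ≠ v ∧ (v+3 : Fin 4) ≠ v ∧ (v+1 : Fin 4) ≠ v+3 ∧ (v+2 : Fin 4) ≠ v ∧
    (v+2 : Fin 4) ≠ v+1 ∧ (v+2 : Fin 4) ≠ v+3 := by
  simp only [C4, SimpleGraph.fromRel_adj]; decide

end AuxC4Lemma

/-- In any [⌞]-representation of C4, every path has a neighbour sharing a grid
edge on its vertical segment and one sharing a grid edge on its horizontal
segment. -/
theorem C4_lemma (P : Fin 4 → BendPath) (hL : ∀ v, (P v).isL)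
    (hrep : IsEPGRep C4 P) (v : Fin 4) :
    (∃ u, C4.Adj u v ∧ ∃ e ∈ (P v).vertEdges, e ∈ (P u).edges) ∧
    (∃ u, C4.Adj u v ∧ ∃ e ∈ (P v).horizEdges, e ∈ (P u).edges) := by
  obtain ⟨a1, a3, n13, n2, a21, a23, e1, e3, e13, e2, e21, e23⟩ := adj_facts v
  have svu := (shares_iff (hL v) (hL (v+1))).mp ((hrep v (v+1) e1.symm).mp a1.symm)
  have svw := (shares_iff (hL v) (hL (v+3))).mp ((hrep v (v+3) e3.symm).mp a3.symm)
  have nuw : ¬ (VS (P (v+1)) (P (v+3)) ∨ HS (P (v+1)) (P (v+3))) := fun h =>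
    n13 ((hrep (v+1) (v+3) e13).mpr ((shares_iff (hL (v+1)) (hL (v+3))).mpr h))
  have szu := (shares_iff (hL (v+2)) (hL (v+1))).mp ((hrep (v+2) (v+1) e21).mp a21)
  have szw := (shares_iff (hL (v+2)) (hL (v+3))).mp ((hrep (v+2) (v+3) e23).mp a23)
  have nzv : ¬ (VS (P (v+2)) (P v) ∨ HS (P (v+2)) (P v)) := fun h =>
    n2 ((hrep (v+2) v e2).mpr ((shares_iff (hL (v+2)) (hL v)).mpr h))
  obtain ⟨hV, hH⟩ := key svu svw nuw szu szw nzv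
  constructor
  · rcases hV with h | h
    · exact ⟨v+1, a1, VS_edge (hL v) (hL (v+1)) h⟩
    · exact ⟨v+3, a3, VS_edge (hL v) (hL (v+3)) h⟩
  · rcases hH with h | h
    · exact ⟨v+1, a1, HS_edge (hL v) (hL (v+1)) h⟩
    · exact ⟨v+3, a3, HS_edge (hL v) (hL (v+3)) h⟩
end

section
/- The complete bipartite graph K_{2,3} does not admit an [⌞,⌜]-representation: there is no assignment of single-bend grid paths, each of shape ⌞ or ⌜, to the vertices of K_{2,3} such that two vertices are adjacent iff their paths share a grid edge. -/
namespace BendPath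

/-- lower end (inclusive) of the set of vertical edge heights -/
def vlo (p : BendPath) : ℤ := if p.vUp then p.y else p.y - p.h
/-- upper end (exclusive) of the set of vertical edge heights -/
def vhi (p : BendPath) : ℤ := if p.vUp then p.y + p.h else p.y

lemma shapeF (p : BendPath) : p.vlo ≤ p.y ∧ p.y ≤ p.vhi := by
  unfold vlo vhi; split <;> omega

lemma mem_edges (p : BendPath) (hr : p.hRight = true) (e : GridEdge) :
    e ∈ p.edges ↔ (e.1 = true ∧ e.2.1 = p.x ∧ p.vlo ≤ e.2.2 ∧ e.2.2 < p.vhi)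
      ∨ (e.1 = false ∧ e.2.2 = p.y ∧ p.x ≤ e.2.1 ∧ e.2.1 < p.x + p.w) := by
  obtain ⟨bb, s, t⟩ := e
  cases hup : p.vUp <;>
    simp only [edges, vertEdges, horizEdges, Set.mem_union, Set.mem_setOf_eq, hr, hup,
      if_true, if_false, Bool.false_eq_true, Bool.true_eq_false, reduceIte,
      Prod.mk.injEq, vlo, vhi] <;>
  constructor
  · rintro (⟨i, hi, rfl, rfl, rfl⟩ | ⟨i, hi, rfl, rfl, rfl⟩)
    · exact Or.inl ⟨rfl, rfl, by omega, by omega⟩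
    · exact Or.inr ⟨rfl, rfl, by omega, by omega⟩
  · rintro (⟨rfl, rfl, h1, h2⟩ | ⟨rfl, rfl, h1, h2⟩)
    · exact Or.inl ⟨(p.y - 1 - t).toNat, by omega, rfl, rfl, by omega⟩
    · exact Or.inr ⟨(s - p.x).toNat, by omega, rfl, by omega, rfl⟩
  · rintro (⟨i, hi, rfl, rfl, rfl⟩ | ⟨i, hi, rfl, rfl, rfl⟩)
    · exact Or.inl ⟨rfl, rfl, by omega, by omega⟩
    · exact Or.inr ⟨rfl, rfl, by omega, by omega⟩
  · rintro (⟨rfl, rfl, h1, h2⟩ | ⟨rfl, rfl, h1, h2⟩)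
    · exact Or.inl ⟨(t - p.y).toNat, by omega, rfl, rfl, by omega⟩
    · exact Or.inr ⟨(s - p.x).toNat, by omega, rfl, by omega, rfl⟩

/-- the two paths share a vertical grid edge -/
def VShare (p q : BendPath) : Prop :=
  p.x = q.x ∧ ∃ t : ℤ, p.vlo ≤ t ∧ t < p.vhi ∧ q.vlo ≤ t ∧ t < q.vhi

/-- the two paths share a horizontal grid edge -/
def HShare (p q : BendPath) : Prop :=
  p.y = q.y ∧ ∃ s : ℤ, p.x ≤ s ∧ s < p.x + p.w ∧ q.x ≤ s ∧ s < q.x + q.w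

lemma sharesEdge_iff {p q : BendPath} (hp : p.hRight = true) (hq : q.hRight = true) :
    SharesEdge p q ↔ VShare p q ∨ HShare p q := by
  constructor
  · rintro ⟨e, hep, heq⟩
    rw [mem_edges p hp] at hep
    rw [mem_edges q hq] at heq
    rcases hep with ⟨h1, h2, h3, h4⟩ | ⟨h1, h2, h3, h4⟩ <;>
      rcases heq with ⟨g1, g2, g3, g4⟩ | ⟨g1, g2, g3, g4⟩
    · exact Or.inl ⟨by omega, e.2.2, h3, h4, g3, g4⟩
    · rw [h1] at g1; cases g1
    · rw [g1] at h1; cases h1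
    · exact Or.inr ⟨by omega, e.2.1, h3, h4, g3, g4⟩
  · rintro (⟨hx, t, h1, h2, h3, h4⟩ | ⟨hy, s, h1, h2, h3, h4⟩)
    · exact ⟨(true, p.x, t), (mem_edges p hp _).mpr (Or.inl ⟨rfl, rfl, h1, h2⟩),
        (mem_edges q hq _).mpr (Or.inl ⟨rfl, hx, h3, h4⟩)⟩
    · exact ⟨(false, s, p.y), (mem_edges p hp _).mpr (Or.inr ⟨rfl, rfl, h1, h2⟩),
        (mem_edges q hq _).mpr (Or.inr ⟨rfl, hy, h3, h4⟩)⟩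

/-- two b's both sharing vertically with both a's is impossible -/
lemma sameVV {a a' b b' : BendPath}
    (haa' : ¬ VShare a a') (hbb' : ¬ VShare b b')
    (h1 : VShare a b) (h1' : VShare a' b) (h2 : VShare a b') (h2' : VShare a' b') : False := by
  obtain ⟨hx1, t1, ht1⟩ := h1
  obtain ⟨hx1', t2, ht2⟩ := h1'
  obtain ⟨hx2, t3, ht3⟩ := h2
  obtain ⟨hx2', t4, ht4⟩ := h2'
  have hA : ∀ t : ℤ, ¬(a.vlo ≤ t ∧ t < a.vhi ∧ a'.vlo ≤ t ∧ t < a'.vhi) :=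
    fun t ht => haa' ⟨by omega, t, ht⟩
  have hB : ∀ t : ℤ, ¬(b.vlo ≤ t ∧ t < b.vhi ∧ b'.vlo ≤ t ∧ t < b'.vhi) :=
    fun t ht => hbb' ⟨by omega, t, ht⟩
  have a1 := hA t1; have a2 := hA t2; have a3 := hA t3; have a4 := hA t4
  have b1 := hB t1; have b2 := hB t2; have b3 := hB t3; have b4 := hB t4
  omega

/-- two b's both sharing horizontally with both a's is impossible -/
lemma sameHH {a a' b b' : BendPath}
    (haa' : ¬ HShare a a') (hbb' : ¬ HShare b b')
    (h1 : HShare a b) (h1' : HShare a' b) (h2 : HShare a b') (h2' : HShare a' b') : False := by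
  obtain ⟨hy1, t1, ht1⟩ := h1
  obtain ⟨hy1', t2, ht2⟩ := h1'
  obtain ⟨hy2, t3, ht3⟩ := h2
  obtain ⟨hy2', t4, ht4⟩ := h2'
  have hA : ∀ s : ℤ, ¬(a.x ≤ s ∧ s < a.x + a.w ∧ a'.x ≤ s ∧ s < a'.x + a'.w) :=
    fun s hs => haa' ⟨by omega, s, hs⟩
  have hB : ∀ s : ℤ, ¬(b.x ≤ s ∧ s < b.x + b.w ∧ b'.x ≤ s ∧ s < b'.x + b'.w) :=
    fun s hs => hbb' ⟨by omega, s, hs⟩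
  have a1 := hA t1; have a2 := hA t2; have a3 := hA t3; have a4 := hA t4
  have b1 := hB t1; have b2 := hB t2; have b3 := hB t3; have b4 := hB t4
  omega

/-- two b's both sharing vertically with a and horizontally with a' is impossible -/
lemma sameVH {a a' b b' : BendPath} (hbb' : ¬ HShare b b')
    (hv : VShare a b) (hh : HShare a' b) (hv' : VShare a b') (hh' : HShare a' b') : False := by
  obtain ⟨hx, t, ht⟩ := hv
  obtain ⟨hy, s, hs⟩ := hh
  obtain ⟨hx', t', ht'⟩ := hv'
  obtain ⟨hy', s', hs'⟩ := hh'
  exact hbb' ⟨by omega, b.x, by omega⟩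

/-- one b sharing vertically with both a's and another sharing horizontally with both -/
lemma VV_HH {a a' b b' : BendPath} (haa' : ¬ HShare a a')
    (hv : VShare a b) (hv' : VShare a' b) (hh : HShare a b') (hh' : HShare a' b') : False := by
  obtain ⟨hx0, t0, ht0⟩ := hv
  obtain ⟨hx0', t0', ht0'⟩ := hv'
  obtain ⟨hy2, s2, hs2⟩ := hh
  obtain ⟨hy2', s2', hs2'⟩ := hh'
  exact haa' ⟨by omega, a.x, by omega⟩

/-- configuration {VV, VH, HV} is impossible -/
lemma case1 {a a' b0 b1 b2 : BendPath} (haa' : ¬ VShare a a')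
    (h01 : ¬ VShare b0 b1) (h02 : ¬ VShare b0 b2)
    (hva0 : VShare a b0) (hv'0 : VShare a' b0)
    (hva1 : VShare a b1) (hh'1 : HShare a' b1)
    (hha2 : HShare a b2) (hv'2 : VShare a' b2) : False := by
  obtain ⟨hx0, t0, ht0⟩ := hva0
  obtain ⟨hx0', t0', ht0'⟩ := hv'0
  obtain ⟨hx1, t1, ht1⟩ := hva1
  obtain ⟨hy1, s1, hs1⟩ := hh'1
  obtain ⟨hy2, s2, hs2⟩ := hha2
  obtain ⟨hx2', t2, ht2⟩ := hv'2
  obtain ⟨Fa1, Fa2⟩ := shapeF a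
  obtain ⟨Fa1', Fa2'⟩ := shapeF a'
  obtain ⟨Fb11, Fb12⟩ := shapeF b1
  obtain ⟨Fb21, Fb22⟩ := shapeF b2
  have hA : ∀ t : ℤ, ¬(a.vlo ≤ t ∧ t < a.vhi ∧ a'.vlo ≤ t ∧ t < a'.vhi) :=
    fun t ht => haa' ⟨by omega, t, ht⟩
  have hB1 : ∀ t : ℤ, ¬(b0.vlo ≤ t ∧ t < b0.vhi ∧ b1.vlo ≤ t ∧ t < b1.vhi) :=
    fun t ht => h01 ⟨by omega, t, ht⟩
  have hB2 : ∀ t : ℤ, ¬(b0.vlo ≤ t ∧ t < b0.vhi ∧ b2.vlo ≤ t ∧ t < b2.vhi) :=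
    fun t ht => h02 ⟨by omega, t, ht⟩
  have k1 := hA a.vlo; have k2 := hA a'.vlo
  have k3 := hB1 (a.vhi - 1); have k4 := hB2 (a'.vhi - 1)
  omega

/-- configuration {VH, HV, HH} is impossible -/
lemma case2 {a a' b0 b1 b2 : BendPath} (haa' : ¬ HShare a a')
    (h02 : ¬ HShare b0 b2) (h12 : ¬ HShare b1 b2)
    (hv0 : VShare a b0) (hh0 : HShare a' b0)
    (hh1 : HShare a b1) (hv1 : VShare a' b1)
    (hh2 : HShare a b2) (hh2' : HShare a' b2) : False := by
  obtain ⟨hx0, t0, ht0⟩ := hv0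
  obtain ⟨hy0, s0, hs0⟩ := hh0
  obtain ⟨hy1, s1, hs1⟩ := hh1
  obtain ⟨hx1, t1, ht1⟩ := hv1
  obtain ⟨hy2, s2, hs2⟩ := hh2
  obtain ⟨hy2', s2', hs2'⟩ := hh2'
  have hA : ∀ s : ℤ, ¬(a.x ≤ s ∧ s < a.x + a.w ∧ a'.x ≤ s ∧ s < a'.x + a'.w) :=
    fun s hs => haa' ⟨by omega, s, hs⟩
  have hB02 : ∀ s : ℤ, ¬(b0.x ≤ s ∧ s < b0.x + b0.w ∧ b2.x ≤ s ∧ s < b2.x + b2.w) :=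
    fun s hs => h02 ⟨by omega, s, hs⟩
  have hB12 : ∀ s : ℤ, ¬(b1.x ≤ s ∧ s < b1.x + b1.w ∧ b2.x ≤ s ∧ s < b2.x + b2.w) :=
    fun s hs => h12 ⟨by omega, s, hs⟩
  have k1 := hA a.x; have k2 := hA a'.x
  have k3 := hB02 a.x; have k4 := hB12 a'.x
  omega

end BendPath

/-- K_{2,3} admits no [⌞,⌜]-representation. -/
theorem K23_not_in_L_Gamma :
    ¬ ∃ P : (Fin 2 ⊕ Fin 3) → BendPath,
      (∀ v, (P v).isL ∨ (P v).isGamma) ∧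
      IsEPGRep (completeBipartiteGraph (Fin 2) (Fin 3)) P := by
  rintro ⟨P, hshape, hrep⟩
  have hr : ∀ v, (P v).hRight = true := by
    intro v; rcases hshape v with h | h
    · exact h.2
    · exact h.2
  -- positive share facts
  have adj : ∀ (i : Fin 2) (j : Fin 3),
      BendPath.VShare (P (.inl i)) (P (.inr j)) ∨ BendPath.HShare (P (.inl i)) (P (.inr j)) := by
    intro i j
    exact (BendPath.sharesEdge_iff (hr _) (hr _)).mp
      ((hrep (.inl i) (.inr j) (by simp)).mp (by simp))
  -- negative share facts
  have nadjA : ∀ (i i' : Fin 2), i ≠ i' →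
      ¬ BendPath.VShare (P (.inl i)) (P (.inl i')) ∧
      ¬ BendPath.HShare (P (.inl i)) (P (.inl i')) := by
    intro i i' hii
    have h := hrep (.inl i) (.inl i') (by simp [hii])
    constructor
    · intro hv
      exact absurd (h.mpr ((BendPath.sharesEdge_iff (hr _) (hr _)).mpr (Or.inl hv))) (by simp)
    · intro hh
      exact absurd (h.mpr ((BendPath.sharesEdge_iff (hr _) (hr _)).mpr (Or.inr hh))) (by simp)
  have nadjB : ∀ (j j' : Fin 3), j ≠ j' →
      ¬ BendPath.VShare (P (.inr j)) (P (.inr j')) ∧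
      ¬ BendPath.HShare (P (.inr j)) (P (.inr j')) := by
    intro j j' hjj
    have h := hrep (.inr j) (.inr j') (by simp [hjj])
    constructor
    · intro hv
      exact absurd (h.mpr ((BendPath.sharesEdge_iff (hr _) (hr _)).mpr (Or.inl hv))) (by simp)
    · intro hh
      exact absurd (h.mpr ((BendPath.sharesEdge_iff (hr _) (hr _)).mpr (Or.inr hh))) (by simp)
  obtain ⟨nVaa, nHaa⟩ := nadjA 0 1 (by decide)
  obtain ⟨nV01, nH01⟩ := nadjB 0 1 (by decide)
  obtain ⟨nV02, nH02⟩ := nadjB 0 2 (by decide)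
  obtain ⟨nV12, nH12⟩ := nadjB 1 2 (by decide)
  obtain ⟨nV10, nH10⟩ := nadjB 1 0 (by decide)
  obtain ⟨nV20, nH20⟩ := nadjB 2 0 (by decide)
  obtain ⟨nV21, nH21⟩ := nadjB 2 1 (by decide)
  rcases adj 0 0 with v0 | h0 <;> rcases adj 1 0 with v0' | h0' <;>
    rcases adj 0 1 with v1 | h1 <;> rcases adj 1 1 with v1' | h1' <;>
    rcases adj 0 2 with v2 | h2 <;> rcases adj 1 2 with v2' | h2' <;>
    first
    | exact BendPath.sameVV nVaa nV01 v0 v0' v1 v1'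
    | exact BendPath.sameVV nVaa nV02 v0 v0' v2 v2'
    | exact BendPath.sameVV nVaa nV12 v1 v1' v2 v2'
    | exact BendPath.sameHH nHaa nH01 h0 h0' h1 h1'
    | exact BendPath.sameHH nHaa nH02 h0 h0' h2 h2'
    | exact BendPath.sameHH nHaa nH12 h1 h1' h2 h2'
    | exact BendPath.sameVH nH01 v0 h0' v1 h1'
    | exact BendPath.sameVH nH02 v0 h0' v2 h2'
    | exact BendPath.sameVH nH12 v1 h1' v2 h2'
    | exact BendPath.sameVH nH01 v0' h0 v1' h1
    | exact BendPath.sameVH nH02 v0' h0 v2' h2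
    | exact BendPath.sameVH nH12 v1' h1 v2' h2
    | exact BendPath.VV_HH nHaa v0 v0' h1 h1'
    | exact BendPath.VV_HH nHaa v0 v0' h2 h2'
    | exact BendPath.VV_HH nHaa v1 v1' h0 h0'
    | exact BendPath.VV_HH nHaa v1 v1' h2 h2'
    | exact BendPath.VV_HH nHaa v2 v2' h0 h0'
    | exact BendPath.VV_HH nHaa v2 v2' h1 h1'
    | exact BendPath.case1 nVaa nV01 nV02 v0 v0' v1 h1' h2 v2'
    | exact BendPath.case1 nVaa nV02 nV01 v0 v0' v2 h2' h1 v1'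
    | exact BendPath.case1 nVaa nV10 nV12 v1 v1' v0 h0' h2 v2'
    | exact BendPath.case1 nVaa nV12 nV10 v1 v1' v2 h2' h0 v0'
    | exact BendPath.case1 nVaa nV20 nV21 v2 v2' v0 h0' h1 v1'
    | exact BendPath.case1 nVaa nV21 nV20 v2 v2' v1 h1' h0 v0'
    | exact BendPath.case2 nHaa nH02 nH12 v0 h0' h1 v1' h2 h2'
    | exact BendPath.case2 nHaa nH01 nH21 v0 h0' h2 v2' h1 h1'
    | exact BendPath.case2 nHaa nH12 nH02 v1 h1' h0 v0' h2 h2'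
    | exact BendPath.case2 nHaa nH10 nH20 v1 h1' h2 v2' h0 h0'
    | exact BendPath.case2 nHaa nH21 nH01 v2 h2' h0 v0' h1 h1'
    | exact BendPath.case2 nHaa nH20 nH10 v2 h2' h1 v1' h0 h0'
end

section
/- In any [⌞]-representation of a graph, a vertex whose neighbourhood is a stable set has at most four external neighbours. Here a neighbour v of u is internal if u's bend-point is not contained in P_v and the horizontal (resp. vertical) segment of P_v sharing an edge with P_u is contained in the horizontal (resp. vertical) segment of P_u; otherwise v is an external neighbour of u. -/
/-- `v` is an internal neighbour of `u` in the [⌞]-representation `P`. -/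
def InternalNbr {V : Type*} (G : SimpleGraph V) (P : V → BendPath) (u v : V) : Prop :=
  G.Adj u v ∧ ((P u).x, (P u).y) ∉ (P v).points ∧
  (((∃ e ∈ (P v).horizEdges, e ∈ (P u).edges) ∧ (P v).horizEdges ⊆ (P u).horizEdges) ∨
   ((∃ e ∈ (P v).vertEdges, e ∈ (P u).edges) ∧ (P v).vertEdges ⊆ (P u).vertEdges))

/-- `v` is an external neighbour of `u` : a neighbour that is not internal. -/
def ExternalNbr {V : Type*} (G : SimpleGraph V) (P : V → BendPath) (u v : V) : Prop :=
  G.Adj u v ∧ ¬ InternalNbr G P u v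

lemma mem_vert_iff (p : BendPath) (hp : p.isL) (bb : Bool) (a b : ℤ) :
    (bb, a, b) ∈ p.vertEdges ↔ bb = true ∧ a = p.x ∧ p.y ≤ b ∧ b < p.y + p.h := by
  obtain ⟨h1, h2⟩ := hp
  simp only [BendPath.vertEdges, Set.mem_setOf_eq, h1, if_true, Prod.mk.injEq]
  constructor
  · rintro ⟨i, hi, hb, ha, hbb⟩
    exact ⟨hb, ha, by omega, by omega⟩
  · rintro ⟨hb, ha, h1', h2'⟩
    exact ⟨(b - p.y).toNat, by omega, hb, ha, by omega⟩

lemma mem_horiz_iff (p : BendPath) (hp : p.isL) (bb : Bool) (a b : ℤ) :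
    (bb, a, b) ∈ p.horizEdges ↔ bb = false ∧ b = p.y ∧ p.x ≤ a ∧ a < p.x + p.w := by
  obtain ⟨h1, h2⟩ := hp
  simp only [BendPath.horizEdges, Set.mem_setOf_eq, h2, if_true, Prod.mk.injEq]
  constructor
  · rintro ⟨i, hi, hb, ha, hbb⟩
    exact ⟨hb, hbb, by omega, by omega⟩
  · rintro ⟨hb, ha, h1', h2'⟩
    exact ⟨(a - p.x).toNat, by omega, hb, by omega, ha⟩

lemma mem_edges_iff (p : BendPath) (hp : p.isL) (bb : Bool) (a b : ℤ) :
    (bb, a, b) ∈ p.edges ↔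
      (bb = true ∧ a = p.x ∧ p.y ≤ b ∧ b < p.y + p.h) ∨
      (bb = false ∧ b = p.y ∧ p.x ≤ a ∧ a < p.x + p.w) := by
  rw [BendPath.edges, Set.mem_union, mem_vert_iff p hp, mem_horiz_iff p hp]

lemma mem_points_iff (p : BendPath) (hp : p.isL) (a b : ℤ) :
    (a, b) ∈ p.points ↔
      (a = p.x ∧ p.y ≤ b ∧ b ≤ p.y + p.h ∧ 0 < p.h) ∨
      (b = p.y ∧ p.x ≤ a ∧ a ≤ p.x + p.w ∧ 0 < p.w) := by
  simp only [BendPath.points, Set.mem_iUnion, exists_prop]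
  constructor
  · rintro ⟨⟨bb, c, d⟩, he, hpt⟩
    rw [mem_edges_iff p hp] at he
    cases bb with
    | true =>
      simp only [Bool.true_eq_false, false_and, or_false, true_and] at he
      simp [edgeEndpoints] at hpt
      omega
    | false =>
      simp only [Bool.false_eq_true, false_and, false_or, true_and] at he
      simp [edgeEndpoints] at hpt
      omega
  · rintro (⟨ha, hb1, hb2, hh⟩ | ⟨hb, ha1, ha2, hw⟩)
    · by_cases hlt : b < p.y + p.h
      · refine ⟨(true, a, b), ?_, ?_⟩
        · rw [mem_edges_iff p hp]; left; exact ⟨rfl, ha, hb1, hlt⟩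
        · simp [edgeEndpoints]
      · refine ⟨(true, a, b - 1), ?_, ?_⟩
        · rw [mem_edges_iff p hp]; left; exact ⟨rfl, ha, by omega, by omega⟩
        · simp [edgeEndpoints]
    · by_cases hlt : a < p.x + p.w
      · refine ⟨(false, a, b), ?_, ?_⟩
        · rw [mem_edges_iff p hp]; right; exact ⟨rfl, hb, ha1, hlt⟩
        · simp [edgeEndpoints]
      · refine ⟨(false, a - 1, b), ?_, ?_⟩
        · rw [mem_edges_iff p hp]; right; exact ⟨rfl, hb, by omega, by omega⟩
        · simp [edgeEndpoints]

lemma key_lemma (p q : BendPath) (hp : p.isL) (hq : q.isL)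
    (hshare : SharesEdge p q)
    (hni : ((p.x, p.y) ∈ q.points) ∨
      (¬((∃ e ∈ q.horizEdges, e ∈ p.edges) ∧ q.horizEdges ⊆ p.horizEdges) ∧
       ¬((∃ e ∈ q.vertEdges, e ∈ p.edges) ∧ q.vertEdges ⊆ p.vertEdges))) :
    (true, p.x, p.y + p.h) ∈ q.edges ∨ (true, p.x, p.y) ∈ q.edges ∨
    (false, p.x + p.w, p.y) ∈ q.edges ∨ (false, p.x, p.y) ∈ q.edges := by
  obtain ⟨⟨bb, a, b⟩, hep, heq⟩ := hshare
  rw [mem_edges_iff p hp] at hep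
  rw [mem_edges_iff q hq] at heq
  rw [mem_edges_iff q hq, mem_edges_iff q hq, mem_edges_iff q hq, mem_edges_iff q hq]
  cases bb with
  | true =>
    simp only [Bool.true_eq_false, false_and, or_false, true_and] at hep heq
    rcases hni with hb | ⟨hDh, hDv⟩
    · rw [mem_points_iff q hq] at hb
      simp only [Bool.true_eq_false, Bool.false_eq_true, false_and, or_false, false_or,
        true_and]
      omega
    · have hsub : ¬ q.vertEdges ⊆ p.vertEdges := by
        intro hsub
        exact hDv ⟨⟨(true, a, b), by rw [mem_vert_iff q hq]; exact ⟨rfl, heq.1, heq.2.1, heq.2.2⟩,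
          by rw [mem_edges_iff p hp]; left; exact ⟨rfl, hep⟩⟩, hsub⟩
      obtain ⟨⟨bb', a', b'⟩, he'q, he'p⟩ := Set.not_subset.mp hsub
      rw [mem_vert_iff q hq] at he'q
      rw [mem_vert_iff p hp] at he'p
      obtain ⟨hbb', ha', hb'⟩ := he'q
      subst hbb'
      simp only [true_and] at he'p
      simp only [Bool.true_eq_false, Bool.false_eq_true, false_and, or_false, false_or,
        true_and]
      omega
  | false =>
    simp only [Bool.false_eq_true, false_and, false_or, true_and] at hep heq
    rcases hni with hb | ⟨hDh, hDv⟩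
    · rw [mem_points_iff q hq] at hb
      simp only [Bool.true_eq_false, Bool.false_eq_true, false_and, or_false, false_or,
        true_and]
      omega
    · have hsub : ¬ q.horizEdges ⊆ p.horizEdges := by
        intro hsub
        exact hDh ⟨⟨(false, a, b), by rw [mem_horiz_iff q hq]; exact ⟨rfl, heq.1, heq.2.1, heq.2.2⟩,
          by rw [mem_edges_iff p hp]; right; exact ⟨rfl, hep⟩⟩, hsub⟩
      obtain ⟨⟨bb', a', b'⟩, he'q, he'p⟩ := Set.not_subset.mp hsub
      rw [mem_horiz_iff q hq] at he'q
      rw [mem_horiz_iff p hp] at he'p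
      obtain ⟨hbb', ha', hb'⟩ := he'q
      subst hbb'
      simp only [true_and] at he'p
      simp only [Bool.true_eq_false, Bool.false_eq_true, false_and, or_false, false_or,
        true_and]
      omega

/-- In an [⌞]-representation, a vertex whose neighbourhood is a stable set has at
most four external neighbours. -/
theorem at_most_four_external {V : Type*} (G : SimpleGraph V) (P : V → BendPath)
    (hL : ∀ v, (P v).isL) (hrep : IsEPGRep G P) (u : V)
    (hstable : ∀ a b, G.Adj u a → G.Adj u b → ¬ G.Adj a b)
    (T : Finset V) (hT : ∀ v ∈ T, ExternalNbr G P u v) :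
    T.card ≤ 4 := by
  classical
  set p := P u with hpdef
  set E1 : GridEdge := (true, p.x, p.y + p.h) with hE1
  set E2 : GridEdge := (true, p.x, p.y) with hE2
  set E3 : GridEdge := (false, p.x + p.w, p.y) with hE3
  set E4 : GridEdge := (false, p.x, p.y) with hE4
  have hkey : ∀ v ∈ T, E1 ∈ (P v).edges ∨ E2 ∈ (P v).edges ∨
      E3 ∈ (P v).edges ∨ E4 ∈ (P v).edges := by
    intro v hv
    obtain ⟨hadj, hnint⟩ := hT v hv
    have hne : u ≠ v := G.ne_of_adj hadj
    have hsh : SharesEdge (P u) (P v) := (hrep u v hne).mp hadj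
    apply key_lemma (P u) (P v) (hL u) (hL v) hsh
    by_cases hb : ((P u).x, (P u).y) ∈ (P v).points
    · exact Or.inl hb
    · exact Or.inr ⟨fun hD => hnint ⟨hadj, hb, Or.inl hD⟩,
        fun hD => hnint ⟨hadj, hb, Or.inr hD⟩⟩
  set f : V → GridEdge := fun v =>
    if E1 ∈ (P v).edges then E1 else if E2 ∈ (P v).edges then E2
    else if E3 ∈ (P v).edges then E3 else E4 with hf
  have hf1 : ∀ v ∈ T, f v ∈ (P v).edges := by
    intro v hv
    simp only [hf]
    split_ifs with h1 h2 h3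
    · exact h1
    · exact h2
    · exact h3
    · rcases hkey v hv with h | h | h | h
      · exact absurd h h1
      · exact absurd h h2
      · exact absurd h h3
      · exact h
  have hfS : ∀ v ∈ T, f v ∈ ({E1, E2, E3, E4} : Finset GridEdge) := by
    intro v hv
    simp only [hf]
    split_ifs <;> simp
  have hinj : Set.InjOn f T := by
    intro v1 hv1 v2 hv2 heq
    by_contra hne
    have hsh : SharesEdge (P v1) (P v2) :=
      ⟨f v1, hf1 v1 hv1, heq ▸ hf1 v2 hv2⟩
    have hadj : G.Adj v1 v2 := (hrep v1 v2 hne).mpr hsh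
    exact hstable v1 v2 (hT v1 hv1).1 (hT v2 hv2).1 hadj
  have hcard := Finset.card_le_card_of_injOn f hfS hinj
  have h1 := Finset.card_insert_le E1 ({E2, E3, E4} : Finset GridEdge)
  have h2 := Finset.card_insert_le E2 ({E3, E4} : Finset GridEdge)
  have h3 := Finset.card_insert_le E3 ({E4} : Finset GridEdge)
  simp only [Finset.card_singleton] at h3
  omega
end

section
/- Let G be a split graph with split partition (C,S), and let v be a vertex of G with N(v) = C \ {v}. Then G admits an [⌞]-representation if and only if G − v does. -/
def SplitPartition {V : Type*} (G : SimpleGraph V) (C S : Set V) : Prop :=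
  (∀ v, v ∈ C ∨ v ∈ S) ∧ Disjoint C S ∧ G.IsClique C ∧
    S.Pairwise (fun a b => ¬ G.Adj a b)

/-- `G` admits an [⌞]-representation. -/
def InL {V : Type*} (G : SimpleGraph V) : Prop :=
  ∃ P : V → BendPath, (∀ v, (P v).isL) ∧ IsEPGRep G P


namespace BendPath

lemma memV {p : BendPath} (hp : p.isL) {a t : ℤ} :
    ((true, a, t) : GridEdge) ∈ p.edges ↔ a = p.x ∧ p.y ≤ t ∧ t < p.y + p.h := by
  obtain ⟨h1, h2⟩ := hp
  simp only [edges, vertEdges, horizEdges, Set.mem_union, Set.mem_setOf_eq, h1, h2, if_true,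
    Prod.mk.injEq]
  constructor
  · rintro (⟨i, hi, -, rfl, rfl⟩ | ⟨i, hi, h, -⟩)
    · omega
    · exact absurd h (by simp)
  · rintro ⟨rfl, hl, hr⟩
    exact Or.inl ⟨(t - p.y).toNat, by omega, trivial, rfl, by omega⟩

lemma memH {p : BendPath} (hp : p.isL) {s t : ℤ} :
    ((false, s, t) : GridEdge) ∈ p.edges ↔ t = p.y ∧ p.x ≤ s ∧ s < p.x + p.w := by
  obtain ⟨h1, h2⟩ := hp
  simp only [edges, vertEdges, horizEdges, Set.mem_union, Set.mem_setOf_eq, h1, h2, if_true,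
    Prod.mk.injEq]
  constructor
  · rintro (⟨i, hi, h, -⟩ | ⟨i, hi, -, rfl, rfl⟩)
    · exact absurd h (by simp)
    · omega
  · rintro ⟨rfl, hl, hr⟩
    exact Or.inr ⟨(s - p.x).toNat, by omega, trivial, by omega, rfl⟩

end BendPath

lemma sharesEdge_comm {p q : BendPath} : SharesEdge p q ↔ SharesEdge q p := by
  constructor <;> rintro ⟨e, h1, h2⟩ <;> exact ⟨e, h2, h1⟩

lemma sharesEdge_self {p : BendPath} (hp : p.isL) : SharesEdge p p := by
  have := p.nontriv
  rcases Nat.eq_zero_or_pos p.h with hh | hh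
  · exact ⟨(false, p.x, p.y), ((BendPath.memH hp).mpr (by omega)),
      ((BendPath.memH hp).mpr (by omega))⟩
  · exact ⟨(true, p.x, p.y), ((BendPath.memV hp).mpr (by omega)),
      ((BendPath.memV hp).mpr (by omega))⟩

lemma shares_cases {p q : BendPath} (hp : p.isL) (hq : q.isL) (h : SharesEdge p q) :
    (p.x = q.x ∧ ∃ t : ℤ, p.y ≤ t ∧ t < p.y + p.h ∧ q.y ≤ t ∧ t < q.y + q.h)
    ∨ (p.y = q.y ∧ ∃ s : ℤ, p.x ≤ s ∧ s < p.x + p.w ∧ q.x ≤ s ∧ s < q.x + q.w) := by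
  obtain ⟨⟨b, a, t⟩, h1, h2⟩ := h
  cases b
  · rw [BendPath.memH hp] at h1; rw [BendPath.memH hq] at h2
    exact Or.inr ⟨h1.1.symm.trans h2.1, a, h1.2.1, h1.2.2, h2.2.1, h2.2.2⟩
  · rw [BendPath.memV hp] at h1; rw [BendPath.memV hq] at h2
    exact Or.inl ⟨h1.1.symm.trans h2.1, t, h1.2.1, h1.2.2, h2.2.1, h2.2.2⟩

lemma shares_imp {p q : BendPath} (hp : p.isL) (hq : q.isL) (h : SharesEdge p q) :
    p.x = q.x ∨ p.y = q.y := by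
  rcases shares_cases hp hq h with ⟨h, -⟩ | ⟨h, -⟩
  · exact Or.inl h
  · exact Or.inr h

/-- A path consisting of the single vertical edge from `(a,b)` to `(a,b+1)`. -/
def singleV (a b : ℤ) : BendPath := ⟨a, b, 1, 0, true, true, by omega⟩

lemma singleV_isL (a b : ℤ) : (singleV a b).isL := ⟨rfl, rfl⟩

lemma mem_singleV {a b : ℤ} {e : GridEdge} :
    e ∈ (singleV a b).edges ↔ e = (true, a, b) := by
  obtain ⟨bb, s, t⟩ := e
  cases bb
  · rw [BendPath.memH (singleV_isL a b)]
    simp only [singleV, Prod.mk.injEq]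
    constructor
    · rintro ⟨-, h1, h2⟩; omega
    · rintro ⟨h, -⟩; exact absurd h (by simp)
  · rw [BendPath.memV (singleV_isL a b)]
    simp only [singleV, Prod.mk.injEq]
    constructor
    · rintro ⟨rfl, h1, h2⟩; refine ⟨trivial, rfl, by omega⟩
    · rintro ⟨-, rfl, rfl⟩; exact ⟨rfl, by omega⟩

lemma shares_singleV {a b : ℤ} {q : BendPath} :
    SharesEdge (singleV a b) q ↔ ((true, a, b) : GridEdge) ∈ q.edges := by
  constructor
  · rintro ⟨e, h1, h2⟩
    rw [mem_singleV] at h1; subst h1; exact h2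
  · intro h
    exact ⟨(true, a, b), mem_singleV.mpr rfl, h⟩

lemma singleV_not_shares_singleV {a b : ℤ} :
    ¬ SharesEdge (singleV a b) (singleV a (b + 1)) := by
  rw [shares_singleV, mem_singleV]
  simp only [Prod.mk.injEq]
  omega

/-- Stretch all rows by a factor 2. -/
def dbl (p : BendPath) : BendPath :=
  ⟨p.x, 2 * p.y, 2 * p.h, p.w, p.vUp, p.hRight, by have := p.nontriv; omega⟩

lemma dbl_isL {p : BendPath} (hp : p.isL) : (dbl p).isL := hp

lemma mem_dbl_V {p : BendPath} (hp : p.isL) {a t : ℤ} :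
    ((true, a, t) : GridEdge) ∈ (dbl p).edges ↔
      a = p.x ∧ 2 * p.y ≤ t ∧ t < 2 * p.y + 2 * p.h := by
  rw [BendPath.memV (dbl_isL hp)]
  simp only [dbl]
  constructor
  · rintro ⟨rfl, h1, h2⟩; exact ⟨rfl, by omega, by omega⟩
  · rintro ⟨rfl, h1, h2⟩; exact ⟨rfl, by omega, by omega⟩

lemma mem_dbl_even {p : BendPath} (hp : p.isL) {a b : ℤ} :
    ((true, a, 2 * b) : GridEdge) ∈ (dbl p).edges ↔ ((true, a, b) : GridEdge) ∈ p.edges := by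
  rw [mem_dbl_V hp, BendPath.memV hp]
  omega

lemma mem_dbl_odd {p : BendPath} (hp : p.isL) {a b : ℤ} :
    ((true, a, 2 * b + 1) : GridEdge) ∈ (dbl p).edges ↔ ((true, a, b) : GridEdge) ∈ p.edges := by
  rw [mem_dbl_V hp, BendPath.memV hp]
  omega

lemma mem_dbl_H {p : BendPath} (hp : p.isL) {s t : ℤ} :
    ((false, s, t) : GridEdge) ∈ (dbl p).edges ↔
      t = 2 * p.y ∧ p.x ≤ s ∧ s < p.x + p.w := by
  rw [BendPath.memH (dbl_isL hp)]
  simp only [dbl]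

lemma dbl_shares {p q : BendPath} (hp : p.isL) (hq : q.isL) :
    SharesEdge (dbl p) (dbl q) ↔ SharesEdge p q := by
  constructor
  · rintro ⟨⟨b, a, t⟩, h1, h2⟩
    cases b
    · rw [mem_dbl_H hp] at h1; rw [mem_dbl_H hq] at h2
      exact ⟨(false, a, p.y), (BendPath.memH hp).mpr ⟨rfl, h1.2.1, h1.2.2⟩,
        (BendPath.memH hq).mpr ⟨by omega, h2.2.1, h2.2.2⟩⟩
    · rw [mem_dbl_V hp] at h1; rw [mem_dbl_V hq] at h2
      rcases Int.even_or_odd t with ⟨c, hc⟩ | ⟨c, hc⟩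
      · exact ⟨(true, a, c), (BendPath.memV hp).mpr ⟨h1.1, by omega, by omega⟩,
          (BendPath.memV hq).mpr ⟨h2.1, by omega, by omega⟩⟩
      · exact ⟨(true, a, c), (BendPath.memV hp).mpr ⟨h1.1, by omega, by omega⟩,
          (BendPath.memV hq).mpr ⟨h2.1, by omega, by omega⟩⟩
  · rintro ⟨⟨b, a, t⟩, h1, h2⟩
    cases b
    · rw [BendPath.memH hp] at h1; rw [BendPath.memH hq] at h2
      exact ⟨(false, a, 2 * t), (mem_dbl_H hp).mpr ⟨by omega, h1.2.1, h1.2.2⟩,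
        (mem_dbl_H hq).mpr ⟨by omega, h2.2.1, h2.2.2⟩⟩
    · rw [BendPath.memV hp] at h1; rw [BendPath.memV hq] at h2
      exact ⟨(true, a, 2 * t), (mem_dbl_V hp).mpr ⟨h1.1, by omega, by omega⟩,
        (mem_dbl_V hq).mpr ⟨h2.1, by omega, by omega⟩⟩

/-- Transpose (reflect along the main diagonal); maps ⌞ to ⌞. -/
def tr (p : BendPath) : BendPath := ⟨p.y, p.x, p.w, p.h, true, true, by have := p.nontriv; omega⟩

lemma tr_isL (p : BendPath) : (tr p).isL := ⟨rfl, rfl⟩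

lemma tr_memV {p : BendPath} (hp : p.isL) {a t : ℤ} :
    ((true, a, t) : GridEdge) ∈ (tr p).edges ↔ ((false, t, a) : GridEdge) ∈ p.edges := by
  rw [BendPath.memV (tr_isL p), BendPath.memH hp]
  simp only [tr]

lemma tr_memH {p : BendPath} (hp : p.isL) {s t : ℤ} :
    ((false, s, t) : GridEdge) ∈ (tr p).edges ↔ ((true, t, s) : GridEdge) ∈ p.edges := by
  rw [BendPath.memH (tr_isL p), BendPath.memV hp]
  simp only [tr]

lemma tr_shares {p q : BendPath} (hp : p.isL) (hq : q.isL) :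
    SharesEdge (tr p) (tr q) ↔ SharesEdge p q := by
  constructor
  · rintro ⟨⟨b, a, t⟩, h1, h2⟩
    cases b
    · rw [tr_memH hp] at h1; rw [tr_memH hq] at h2; exact ⟨_, h1, h2⟩
    · rw [tr_memV hp] at h1; rw [tr_memV hq] at h2; exact ⟨_, h1, h2⟩
  · rintro ⟨⟨b, a, t⟩, h1, h2⟩
    cases b
    · exact ⟨(true, t, a), (tr_memV hp).mpr h1, (tr_memV hq).mpr h2⟩
    · exact ⟨(false, t, a), (tr_memH hp).mpr h1, (tr_memH hq).mpr h2⟩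

/-- Helly property for pairwise edge-intersecting ⌞ paths, all bends on one row. -/
lemma helly_y {ι : Type*} [Nonempty ι] (P : ι → BendPath) (hL : ∀ i, (P i).isL)
    (hs : ∀ i j, SharesEdge (P i) (P j)) (hY : ∀ i j, (P i).y = (P j).y) :
    ∃ e : GridEdge, ∀ i, e ∈ (P i).edges := by
  obtain ⟨j0⟩ := ‹Nonempty ι›
  by_cases hw : ∀ i, 0 < (P i).w
  · have hbdd : ∃ b : ℤ, ∀ z : ℤ, (∃ i, (P i).x = z) → z ≤ b := by
      refine ⟨(P j0).x + (P j0).w - 1, ?_⟩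
      rintro z ⟨i, rfl⟩
      rcases shares_cases (hL i) (hL j0) (hs i j0) with ⟨hx, t, ht⟩ | ⟨hy, s, hs'⟩
      · have := hw j0; omega
      · omega
    obtain ⟨L, ⟨i0, hi0⟩, hmax⟩ := Int.exists_greatest_of_bdd hbdd ⟨(P j0).x, j0, rfl⟩
    refine ⟨(false, L, (P j0).y), fun i => (BendPath.memH (hL i)).mpr ⟨(hY j0 i), ?_, ?_⟩⟩
    · exact hmax _ ⟨i, rfl⟩
    · rcases shares_cases (hL i0) (hL i) (hs i0 i) with ⟨hx, t, ht⟩ | ⟨hy, s, hs'⟩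
      · have := hw i; omega
      · omega
  · push_neg at hw
    obtain ⟨i0, hw0⟩ := hw
    have hw0 : (P i0).w = 0 := by omega
    refine ⟨(true, (P i0).x, (P j0).y), fun i => (BendPath.memV (hL i)).mpr ⟨?_, ?_, ?_⟩⟩
    · rcases shares_cases (hL i0) (hL i) (hs i0 i) with ⟨hx, -⟩ | ⟨-, s, hs'⟩
      · exact hx
      · omega
    · exact le_of_eq (hY i j0)
    · rcases shares_cases (hL i0) (hL i) (hs i0 i) with ⟨-, t, ht⟩ | ⟨-, s, hs'⟩
      · have := hY j0 i; have := hY j0 i0; omega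
      · omega

/-- Helly property for pairwise edge-intersecting ⌞ paths. -/
lemma helly {ι : Type*} [Nonempty ι] (P : ι → BendPath) (hL : ∀ i, (P i).isL)
    (hs : ∀ i j, SharesEdge (P i) (P j)) :
    ∃ e : GridEdge, ∀ i, e ∈ (P i).edges := by
  by_cases hY : ∀ i j, (P i).y = (P j).y
  · exact helly_y P hL hs hY
  · push_neg at hY
    obtain ⟨i0, j0, hne⟩ := hY
    have hx0 : (P i0).x = (P j0).x := (shares_imp (hL i0) (hL j0) (hs i0 j0)).resolve_right hne
    have key : ∀ k, (P k).x = (P i0).x := by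
      intro k
      rcases shares_imp (hL k) (hL i0) (hs k i0) with h | h
      · exact h
      · rcases shares_imp (hL k) (hL j0) (hs k j0) with h' | h'
        · exact h'.trans hx0.symm
        · exact absurd (h.symm.trans h') hne
    obtain ⟨e, he⟩ := helly_y (fun i => tr (P i)) (fun i => tr_isL _)
      (fun i j => (tr_shares (hL i) (hL j)).mpr (hs i j))
      (fun i j => (key i).trans (key j).symm)
    obtain ⟨b, a, t⟩ := e
    cases b
    · exact ⟨(true, t, a), fun i => (tr_memH (hL i)).mp (he i)⟩
    · exact ⟨(false, t, a), fun i => (tr_memV (hL i)).mp (he i)⟩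

lemma insert_vertex {V : Type*} (G : SimpleGraph V) (C S : Set V)
    (hsplit : SplitPartition G C S) (v : V) (hv : G.neighborSet v = C \ {v})
    (P : {u : V // u ≠ v} → BendPath) (hL : ∀ w, (P w).isL)
    (hrep : IsEPGRep (G.induce {u | u ≠ v}) P) (a b : ℤ)
    (he : ∀ w : {u : V // u ≠ v}, w.1 ∈ C → ((true, a, b) : GridEdge) ∈ (P w).edges) :
    InL G := by
  classical
  obtain ⟨hCS, hdisj, hclique, hstable⟩ := hsplit
  have hAdj : ∀ w, G.Adj v w ↔ (w ∈ C ∧ w ≠ v) := by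
    intro w
    rw [← SimpleGraph.mem_neighborSet, hv]
    simp [Set.mem_diff]
  have hind : ∀ w1 w2 : {u : V // u ≠ v},
      (G.induce {u | u ≠ v}).Adj w1 w2 ↔ G.Adj w1.1 w2.1 := by
    intro w1 w2
    simp
  set T : {u : V // u ≠ v} → Prop := fun w => ((true, a, b) : GridEdge) ∈ (P w).edges with hT
  have hTA : ∀ w1 w2 : {u : V // u ≠ v}, w1 ≠ w2 → T w1 → T w2 → G.Adj w1.1 w2.1 := by
    intro w1 w2 hne h1 h2
    exact (hind w1 w2).mp ((hrep w1 w2 hne).mpr ⟨(true, a, b), h1, h2⟩)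
  have hvalne : ∀ w1 w2 : {u : V // u ≠ v}, w1 ≠ w2 → w1.1 ≠ w2.1 := by
    intro w1 w2 hne h
    exact hne (Subtype.ext h)
  have hSinT : ∀ w1 w2 : {u : V // u ≠ v}, T w1 → T w2 → w1.1 ∈ S → w2.1 ∈ S → w1 = w2 := by
    intro w1 w2 h1 h2 hS1 hS2
    by_contra hne
    exact hstable hS1 hS2 (hvalne w1 w2 hne) (hTA w1 w2 hne h1 h2)
  by_cases hB : ∃ u : {u : V // u ≠ v}, T u ∧ u.1 ∉ C
  · -- one stable vertex sits on the common edge: double rows and split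
    obtain ⟨u, hTu, huC⟩ := hB
    have huS : u.1 ∈ S := (hCS u.1).resolve_left huC
    have hTC : ∀ w : {u : V // u ≠ v}, w ≠ u → (T w ↔ w.1 ∈ C) := by
      intro w hwu
      constructor
      · intro hw
        by_contra hC
        exact hwu (hSinT w u hw hTu ((hCS w.1).resolve_left hC) huS)
      · exact he w
    have hAdjU : ∀ w : {u : V // u ≠ v}, w ≠ u → (G.Adj u.1 w.1 ↔ w.1 ∈ C) := by
      intro w hwu
      constructor
      · intro hadj
        by_contra hC
        exact hstable huS ((hCS w.1).resolve_left hC) (hvalne u w (Ne.symm hwu)) hadj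
      · intro hC
        exact hTA u w (Ne.symm hwu) hTu (he w hC)
    have key : ∀ w : {u : V // u ≠ v}, w ≠ u →
        (G.Adj u.1 w.1 ↔ SharesEdge (singleV a (2 * b + 1)) (dbl (P w))) := by
      intro w hwu
      rw [hAdjU w hwu, shares_singleV, mem_dbl_odd (hL w)]
      exact (hTC w hwu).symm
    have keyv : ∀ w : {u : V // u ≠ v}, w ≠ u →
        (G.Adj v w.1 ↔ SharesEdge (singleV a (2 * b)) (dbl (P w))) := by
      intro w hwu
      rw [hAdj, shares_singleV, mem_dbl_even (hL w)]
      constructor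
      · rintro ⟨hc, -⟩
        exact he w hc
      · intro hm
        exact ⟨(hTC w hwu).mp hm, w.2⟩
    have hvu : ¬ G.Adj v u.1 := by
      rw [hAdj]
      rintro ⟨hc, -⟩
      exact huC hc
    refine ⟨fun w => if h : w = v then singleV a (2 * b)
      else if (⟨w, h⟩ : {u : V // u ≠ v}) = u then singleV a (2 * b + 1)
      else dbl (P ⟨w, h⟩), ?_, ?_⟩
    · intro w
      dsimp only
      split_ifs with h1 h2
      · exact singleV_isL _ _
      · exact singleV_isL _ _
      · exact dbl_isL (hL _)
    · intro w1 w2 hne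
      dsimp only
      rcases eq_or_ne w1 v with h1 | h1
      · rw [h1] at hne ⊢
        rw [dif_pos rfl, dif_neg (Ne.symm hne)]
        rcases eq_or_ne u ⟨w2, Ne.symm hne⟩ with h2 | h2
        · rw [if_pos h2.symm]
          have hvw : ¬ G.Adj v w2 := by
            have hweq : w2 = u.1 := (congrArg Subtype.val h2).symm
            rw [hweq]
            exact hvu
          simp only [hvw, false_iff]
          exact singleV_not_shares_singleV
        · rw [if_neg (Ne.symm h2)]
          exact keyv _ (Ne.symm h2)
      · rw [dif_neg h1]
        rcases eq_or_ne w2 v with h2 | h2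
        · rw [h2] at hne ⊢
          rw [dif_pos rfl, G.adj_comm, sharesEdge_comm]
          rcases eq_or_ne u ⟨w1, h1⟩ with h2' | h2'
          · rw [if_pos h2'.symm]
            have hvw : ¬ G.Adj v w1 := by
              have hweq : w1 = u.1 := (congrArg Subtype.val h2').symm
              rw [hweq]
              exact hvu
            simp only [hvw, false_iff]
            exact singleV_not_shares_singleV
          · rw [if_neg (Ne.symm h2')]
            exact keyv _ (Ne.symm h2')
        · rw [dif_neg h2]
          have hne' : (⟨w1, h1⟩ : {u : V // u ≠ v}) ≠ ⟨w2, h2⟩ := by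
            intro h
            exact hne (congrArg Subtype.val h)
          rcases eq_or_ne (⟨w1, h1⟩ : {u : V // u ≠ v}) u with hu1 | hu1
          · rw [if_pos hu1]
            have hw1 : w1 = u.1 := congrArg Subtype.val hu1
            rw [if_neg (fun h : (⟨w2, h2⟩ : {u : V // u ≠ v}) = u => hne' (hu1.trans h.symm))]
            rw [hw1]
            exact key ⟨w2, h2⟩ (fun h => hne' (hu1.trans h.symm))
          · rw [if_neg hu1]
            rcases eq_or_ne (⟨w2, h2⟩ : {u : V // u ≠ v}) u with hu2 | hu2
            · rw [if_pos hu2]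
              have hw2 : w2 = u.1 := congrArg Subtype.val hu2
              rw [G.adj_comm, sharesEdge_comm, hw2]
              exact key ⟨w1, h1⟩ hu1
            · rw [if_neg hu2]
              exact (hrep ⟨w1, h1⟩ ⟨w2, h2⟩ hne').trans (dbl_shares (hL _) (hL _)).symm
  · -- no stable vertex on the common edge: just add a single edge for v
    push_neg at hB
    have hTC : ∀ w : {u : V // u ≠ v}, T w ↔ w.1 ∈ C := fun w => ⟨hB w, he w⟩
    have keyv : ∀ w : {u : V // u ≠ v},
        (G.Adj v w.1 ↔ SharesEdge (singleV a b) (P w)) := by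
      intro w
      rw [hAdj, shares_singleV]
      constructor
      · rintro ⟨hc, -⟩
        exact he w hc
      · intro hm
        exact ⟨(hTC w).mp hm, w.2⟩
    refine ⟨fun w => if h : w = v then singleV a b else P ⟨w, h⟩, ?_, ?_⟩
    · intro w
      dsimp only
      split_ifs with h1
      · exact singleV_isL _ _
      · exact hL _
    · intro w1 w2 hne
      dsimp only
      rcases eq_or_ne w1 v with h1 | h1
      · rw [h1] at hne ⊢
        rw [dif_pos rfl, dif_neg (Ne.symm hne)]
        exact keyv ⟨w2, Ne.symm hne⟩
      · rw [dif_neg h1]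
        rcases eq_or_ne w2 v with h2 | h2
        · rw [h2] at hne ⊢
          rw [dif_pos rfl, G.adj_comm, sharesEdge_comm]
          exact keyv ⟨w1, h1⟩
        · rw [dif_neg h2]
          have hne' : (⟨w1, h1⟩ : {u : V // u ≠ v}) ≠ ⟨w2, h2⟩ := by
            intro h
            exact hne (congrArg Subtype.val h)
          exact hrep ⟨w1, h1⟩ ⟨w2, h2⟩ hne'

/-- If N(v) = C \ {v} then G is an [⌞]-graph iff G - v is. -/
theorem remove_C_universal {V : Type*} (G : SimpleGraph V) (C S : Set V)
    (hsplit : SplitPartition G C S) (v : V)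
    (hv : G.neighborSet v = C \ {v}) :
    InL G ↔ InL (G.induce {u | u ≠ v}) := by
  constructor
  · rintro ⟨P, hL, hrep⟩
    refine ⟨fun w => P w.1, fun w => hL _, fun u w hne => ?_⟩
    have : u.1 ≠ w.1 := fun h => hne (Subtype.ext h)
    exact hrep u.1 w.1 this
  · rintro ⟨P, hL, hrep⟩
    by_cases hCne : ∃ w : {u : V // u ≠ v}, w.1 ∈ C
    · have hne : Nonempty {w : {u : V // u ≠ v} // w.1 ∈ C} :=
        ⟨⟨hCne.choose, hCne.choose_spec⟩⟩
      have hs : ∀ i j : {w : {u : V // u ≠ v} // w.1 ∈ C},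
          SharesEdge (P i.1) (P j.1) := by
        intro i j
        rcases eq_or_ne i.1 j.1 with h | h
        · rw [h]
          exact sharesEdge_self (hL _)
        · refine (hrep i.1 j.1 h).mp ?_
          have hvv : i.1.1 ≠ j.1.1 := fun hh => h (Subtype.ext hh)
          exact hsplit.2.2.1 i.2 j.2 hvv
      obtain ⟨⟨eb, ea, ec⟩, hee⟩ :=
        helly (fun i : {w : {u : V // u ≠ v} // w.1 ∈ C} => P i.1) (fun i => hL _) hs
      cases eb
      · -- common edge is horizontal: transpose the representation first
        refine insert_vertex G C S hsplit v hv (fun w => tr (P w)) (fun w => tr_isL _)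
          (fun w1 w2 hne => (hrep w1 w2 hne).trans (tr_shares (hL w1) (hL w2)).symm)
          ec ea (fun w hw => (tr_memV (hL w)).mpr (hee ⟨w, hw⟩))
      · exact insert_vertex G C S hsplit v hv P hL hrep ea ec (fun w hw => hee ⟨w, hw⟩)
    · push_neg at hCne
      exact insert_vertex G C S hsplit v hv P hL hrep 0 0 (fun w hw => absurd hw (hCne w))
end

section
/- Let G be a gem-free split graph with split partition (C,S). Then any two vertices of S having a common neighbour in C are comparable under domination (one's closed neighbourhood contains the other's neighbourhood). -/
/-- The gem: path a=0, b=1, c=2, d=3 plus e=4 adjacent to all of a,b,c,d. -/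
def Gem : SimpleGraph (Fin 5) := SimpleGraph.fromRel (fun i j =>
  (i, j) ∈ ({(0,1),(1,2),(2,3),(4,0),(4,1),(4,2),(4,3)} : Set (Fin 5 × Fin 5)))

/-- `G` contains an induced copy of `H`. -/
def ContainsInduced {α V : Type*} (H : SimpleGraph α) (G : SimpleGraph V) : Prop :=
  ∃ f : α → V, Function.Injective f ∧ ∀ i j, H.Adj i j ↔ G.Adj (f i) (f j)

/-- `x` dominates `y`. -/
def Dominates {V : Type*} (G : SimpleGraph V) (x y : V) : Prop :=
  G.neighborSet y ⊆ insert x (G.neighborSet x)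

/-!
If neither of `s1`, `s2` dominates the other, pick `c1 ∈ N(s2) ∖ N[s1]` and `c2 ∈ N(s1) ∖ N[s2]`.
Both are neighbours of stable vertices, hence lie in the clique, so `s1 c2 c1 s2` is an induced
path, and the common neighbour `c0 ∈ C` is adjacent to all four of its vertices: a gem.
-/

section

variable {V : Type*} {G : SimpleGraph V}

-- The (non-)adjacencies already force the five vertices to be distinct.
theorem containsInduced_gem_of_adj {a b c d e : V}
    (hab : G.Adj a b) (hbc : G.Adj b c) (hcd : G.Adj c d)
    (hea : G.Adj e a) (heb : G.Adj e b) (hec : G.Adj e c) (hed : G.Adj e d)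
    (hac : ¬ G.Adj a c) (had : ¬ G.Adj a d) (hbd : ¬ G.Adj b d) :
    ContainsInduced Gem G := by
  refine ⟨![a, b, c, d, e], ?_, ?_⟩
  · intro i j hij
    fin_cases i <;> fin_cases j <;> simp_all [G.adj_comm]
  · intro i j
    fin_cases i <;> fin_cases j <;>
      simp [Gem, hab, hbc, hcd, hea, heb, hec, hed, hab.symm, hbc.symm, hcd.symm, hea.symm,
        heb.symm, hec.symm, hed.symm, hac, had, hbd, mt G.adj_symm hac, mt G.adj_symm had,
        mt G.adj_symm hbd]

theorem exists_adj_not_adj_of_not_dominates {x y : V} (h : ¬ Dominates G x y) :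
    ∃ v, G.Adj y v ∧ ¬ G.Adj x v := by
  obtain ⟨v, hyv, hv⟩ := Set.not_subset.mp h
  exact ⟨v, hyv, fun hxv => hv (Set.mem_insert_of_mem x hxv)⟩

theorem SplitPartition.mem_clique_of_adj {C S : Set V} (hsplit : SplitPartition G C S) {s v : V}
    (hs : s ∈ S) (hsv : G.Adj s v) : v ∈ C :=
  (hsplit.1 v).resolve_right fun hv => hsplit.2.2.2 hs hv hsv.ne hsv

end

/-- In a gem-free split graph, two S-vertices with a common neighbour in C are
comparable. -/
theorem gemfree_comparable {V : Type*} (G : SimpleGraph V) (C S : Set V)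
    (hsplit : SplitPartition G C S) (hgemfree : ¬ ContainsInduced Gem G)
    (s1 s2 : V) (hs1 : s1 ∈ S) (hs2 : s2 ∈ S)
    (hcommon : ∃ c ∈ C, G.Adj s1 c ∧ G.Adj s2 c) :
    Dominates G s1 s2 ∨ Dominates G s2 s1 := by
  obtain ⟨c0, hc0, hs1c0, hs2c0⟩ := hcommon
  by_contra! hincomparable
  obtain ⟨c1, hs2c1, hs1c1⟩ := exists_adj_not_adj_of_not_dominates hincomparable.1
  obtain ⟨c2, hs1c2, hs2c2⟩ := exists_adj_not_adj_of_not_dominates hincomparable.2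
  have hc1 := hsplit.mem_clique_of_adj hs2 hs2c1
  have hc2 := hsplit.mem_clique_of_adj hs1 hs1c2
  have hc2c1 : G.Adj c2 c1 := hsplit.2.2.1 hc2 hc1 (by rintro rfl; exact hs1c1 hs1c2)
  have hc0c2 : G.Adj c0 c2 := hsplit.2.2.1 hc0 hc2 (by rintro rfl; exact hs2c2 hs2c0)
  have hc0c1 : G.Adj c0 c1 := hsplit.2.2.1 hc0 hc1 (by rintro rfl; exact hs1c1 hs1c0)
  have hs1s2 : ¬ G.Adj s1 s2 := hsplit.2.2.2 hs1 hs2 (by rintro rfl; exact hs1c1 hs2c1)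
  exact hgemfree (containsInduced_gem_of_adj hs1c2 hc2c1 hs2c1.symm
    hs1c0.symm hc0c2 hc0c1 hs2c0.symm hs1c1 hs1s2 (mt G.adj_symm hs2c2))
end

section
/- Let G be a gem-free split graph with split partition (C,S), let s be a maximal vertex of S (not dominated by any other vertex), and let s' ∈ S share a common neighbour with s. Then s dominates s'. -/
/-- In a gem-free split graph, a maximal S-vertex dominates every S-vertex it
shares a common neighbour with. -/
theorem maximal_dominates {V : Type*} (G : SimpleGraph V) (C S : Set V)
    (hsplit : SplitPartition G C S) (hgemfree : ¬ ContainsInduced Gem G)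
    (s s' : V) (hs : s ∈ S) (hs' : s' ∈ S)
    (hmax : ∀ t ∈ S, t ≠ s → ¬ Dominates G t s)
    (hcommon : ∃ c ∈ C, G.Adj s c ∧ G.Adj s' c) :
    Dominates G s s' := by
  obtain ⟨hCS, hdisj, hclique, hSind⟩ := hsplit
  obtain ⟨c, hcC, hsc, hs'c⟩ := hcommon
  by_cases hss' : s' = s
  · subst hss'; exact fun x hx => Set.mem_insert_of_mem _ hx
  intro w hw
  by_contra hwmem
  rw [Set.mem_insert_iff] at hwmem
  push_neg at hwmem
  obtain ⟨hws, hwadj⟩ := hwmem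
  rw [SimpleGraph.mem_neighborSet] at hwadj hw
  -- any neighbour of an S-vertex is in C
  have hC : ∀ x y : V, x ∈ S → G.Adj x y → y ∈ C := by
    intro x y hxS hxy
    rcases hCS y with h | h
    · exact h
    · exact absurd hxy (hSind hxS h hxy.ne)
  have hwC : w ∈ C := hC s' w hs' hw
  -- maximality gives u adjacent to s but not to s'
  have hnd : ¬ Dominates G s' s := hmax s' hs' hss'
  rw [Dominates, Set.not_subset] at hnd
  obtain ⟨u, hu1, hu2⟩ := hnd
  rw [SimpleGraph.mem_neighborSet] at hu1
  rw [Set.mem_insert_iff] at hu2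
  push_neg at hu2
  obtain ⟨hus', hu2⟩ := hu2
  rw [SimpleGraph.mem_neighborSet] at hu2
  have huC : u ∈ C := hC s u hs hu1
  have hScompl : ∀ x, x ∈ S → x ∉ C := fun x hx hxc => Set.disjoint_left.mp hdisj hxc hx
  -- distinctness
  have hsu : s ≠ u := fun h => hScompl s hs (h ▸ huC)
  have hsw : s ≠ w := fun h => hws h.symm
  have hsc' : s ≠ c := fun h => hScompl s hs (h ▸ hcC)
  have hs'u : s' ≠ u := fun h => hScompl s' hs' (h ▸ huC)
  have hs'w : s' ≠ w := hw.ne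
  have hs'c' : s' ≠ c := fun h => hScompl s' hs' (h ▸ hcC)
  have huw : u ≠ w := fun h => hu2 (h ▸ hw)
  have huc : u ≠ c := fun h => hu2 (h ▸ hs'c)
  have hwc : w ≠ c := fun h => hwadj (h ▸ hsc)
  -- adjacencies within C
  have hauw : G.Adj u w := hclique huC hwC huw
  have hauc : G.Adj u c := hclique huC hcC huc
  have hawc : G.Adj w c := hclique hwC hcC hwc
  -- non-adjacencies
  have hnss' : ¬ G.Adj s s' := hSind hs hs' (Ne.symm hss')
  have hnus' : ¬ G.Adj u s' := fun h => hu2 h.symm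
  have hnsw : ¬ G.Adj s w := hwadj
  apply hgemfree
  refine ⟨![s, u, w, s', c], ?_, ?_⟩
  · intro i j h
    fin_cases i <;> fin_cases j <;> simp_all
  · have hGem : ∀ i j : Fin 5, Gem.Adj i j ↔ i ≠ j ∧
        (((i,j) = (0,1) ∨ (i,j) = (1,2) ∨ (i,j) = (2,3) ∨ (i,j) = (4,0) ∨
          (i,j) = (4,1) ∨ (i,j) = (4,2) ∨ (i,j) = (4,3)) ∨
         ((j,i) = (0,1) ∨ (j,i) = (1,2) ∨ (j,i) = (2,3) ∨ (j,i) = (4,0) ∨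
          (j,i) = (4,1) ∨ (j,i) = (4,2) ∨ (j,i) = (4,3))) := by
      intro i j
      rw [Gem, SimpleGraph.fromRel_adj]
      simp only [Set.mem_insert_iff, Set.mem_singleton_iff]
    intro i j
    rw [hGem]
    fin_cases i <;> fin_cases j <;>
      simp only [Matrix.cons_val_zero, Matrix.cons_val_one, Matrix.head_cons,
        Matrix.cons_val_two, Matrix.tail_cons, Matrix.cons_val_three,
        Matrix.cons_val_four, Matrix.cons_val_fin_one, Matrix.head_fin_const] <;>
      first
        | exact iff_of_false (by decide) (G.irrefl)
        | exact iff_of_true (by decide) hu1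
        | exact iff_of_true (by decide) hu1.symm
        | exact iff_of_false (by decide) hnsw
        | exact iff_of_false (by decide) (fun h => hnsw h.symm)
        | exact iff_of_false (by decide) hnss'
        | exact iff_of_false (by decide) (fun h => hnss' h.symm)
        | exact iff_of_true (by decide) hsc
        | exact iff_of_true (by decide) hsc.symm
        | exact iff_of_true (by decide) hauw
        | exact iff_of_true (by decide) hauw.symm
        | exact iff_of_false (by decide) hnus'
        | exact iff_of_false (by decide) (fun h => hnus' h.symm)
        | exact iff_of_true (by decide) hauc
        | exact iff_of_true (by decide) hauc.symm
        | exact iff_of_true (by decide) hw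
        | exact iff_of_true (by decide) hw.symm
        | exact iff_of_true (by decide) hawc
        | exact iff_of_true (by decide) hawc.symm
        | exact iff_of_true (by decide) hs'c
        | exact iff_of_true (by decide) hs'c.symm
end

section
/- Let G be a split graph with split partition (C,S) that contains no induced S-bull, where an S-bull is an induced bull whose three vertices of degree less than 3 in the bull belong to S. Let x1, x2 be incomparable vertices of S. Then no vertex s ∈ S is adjacent simultaneously to some vertex of N(x1) \ N(x2) and some vertex of N(x2) \ N(x1). -/
/-- `G` contains an induced bull (vertices a,b,c,d,e; edges ab, bc, cd, eb, ec)
whose vertices a, d, e of degree < 3 in the bull lie in `S`. -/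
def HasSBull {V : Type*} (G : SimpleGraph V) (S : Set V) : Prop :=
  ∃ a b c d e : V, a ∈ S ∧ d ∈ S ∧ e ∈ S ∧
    [a, b, c, d, e].Pairwise (· ≠ ·) ∧
    G.Adj a b ∧ G.Adj b c ∧ G.Adj c d ∧ G.Adj e b ∧ G.Adj e c ∧
    ¬ G.Adj a c ∧ ¬ G.Adj a d ∧ ¬ G.Adj a e ∧ ¬ G.Adj b d ∧ ¬ G.Adj d e

/-- In an S-bull-free split graph, no S-vertex is adjacent both to a vertex of
N(x1) \ N(x2) and to a vertex of N(x2) \ N(x1), for incomparable x1, x2 ∈ S. -/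
theorem sbullfree_no_crossing {V : Type*} (G : SimpleGraph V) (C S : Set V)
    (hsplit : SplitPartition G C S) (hnobull : ¬ HasSBull G S)
    (x1 x2 : V) (hx1 : x1 ∈ S) (hx2 : x2 ∈ S)
    (hinc1 : ¬ Dominates G x1 x2) (hinc2 : ¬ Dominates G x2 x1) :
    ¬ ∃ s ∈ S,
      (∃ x, x ∈ G.neighborSet x1 \ G.neighborSet x2 ∧ G.Adj s x) ∧
      (∃ y, y ∈ G.neighborSet x2 \ G.neighborSet x1 ∧ G.Adj s y) := by
  rintro ⟨s, hs, ⟨b, ⟨hb1, hb2⟩, hsb⟩, ⟨c, ⟨hc2, hc1⟩, hsc⟩⟩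
  obtain ⟨hcov, hdisj, hclique, hstable⟩ := hsplit
  simp only [SimpleGraph.mem_neighborSet] at hb1 hb2 hc1 hc2
  have hCnotS : ∀ v, v ∈ C → v ∉ S := fun v hv hvS =>
    Set.disjoint_left.mp hdisj hv hvS
  have hbC : b ∈ C := by
    rcases hcov b with h | h
    · exact h
    · exact absurd hb1 (hstable hx1 h hb1.ne)
  have hcC : c ∈ C := by
    rcases hcov c with h | h
    · exact h
    · exact absurd hc2 (hstable hx2 h hc2.ne)
  have hbc : b ≠ c := fun h => hb2 (h ▸ hc2)
  have hadjbc : G.Adj b c := hclique hbC hcC hbc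
  have hx1x2 : ¬ G.Adj x1 x2 := by
    intro h
    rcases hcov x2 with h2 | h2
    · exact hCnotS x2 h2 hx2
    · exact hstable hx1 h2 h.ne h
  have hx1s : ¬ G.Adj x1 s := by
    intro h
    exact hstable hx1 hs (fun he => hc1 (he ▸ hsc)) h
  have hx2s : ¬ G.Adj x2 s := by
    intro h
    exact hstable hx2 hs (fun he => hb2 (he ▸ hsb)) h
  have d1 : x1 ≠ b := hb1.ne
  have d2 : x1 ≠ c := fun h => hCnotS c hcC (h ▸ hx1)
  have d3 : x1 ≠ x2 := fun h => hb2 (h ▸ hb1)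
  have d4 : x1 ≠ s := fun h => hc1 (h ▸ hsc)
  have d6 : b ≠ x2 := fun h => hCnotS b hbC (h ▸ hx2)
  have d7 : b ≠ s := fun h => hCnotS b hbC (h ▸ hs)
  have d8 : c ≠ x2 := hc2.ne'
  have d9 : c ≠ s := fun h => hCnotS c hcC (h ▸ hs)
  have d10 : x2 ≠ s := fun h => hb2 (h ▸ hsb)
  apply hnobull
  refine ⟨x1, b, c, x2, s, hx1, hx2, hs, ?_, hb1, hadjbc, hc2.symm, hsb, hsc,
    hc1, hx1x2, hx1s, fun h => hb2 h.symm, fun h => hx2s h⟩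
  simp only [List.pairwise_cons, List.mem_cons, List.mem_singleton, List.not_mem_nil,
    List.Pairwise.nil, ne_eq]
  constructor
  · rintro t (rfl|rfl|rfl|rfl|h) <;> first | exact d1 | exact d2 | exact d3 | exact d4 | simp_all
  constructor
  · rintro t (rfl|rfl|rfl|h) <;> first | exact hbc | exact d6 | exact d7 | simp_all
  constructor
  · rintro t (rfl|rfl|h) <;> first | exact d8 | exact d9 | simp_all
  constructor
  · rintro t (rfl|h) <;> first | exact d10 | simp_all
  simp
end

section
/- The 3-sun S_1 (the split graph with clique {c1,c2,c3}, stable set {s1,s2,s3}, and edges s_i c_i and s_i c_{i+1} with indices mod 3) does not admit an [⌞]-representation. -/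
/-- The 3-sun: triangle c1=0, c2=1, c3=2; stable set s1=3, s2=4, s3=5;
edges s1c1, s1c2, s2c2, s2c3, s3c3, s3c1. -/
def ThreeSun : SimpleGraph (Fin 6) := SimpleGraph.fromRel (fun i j =>
  (i, j) ∈ ({(0,1),(1,2),(0,2),(3,0),(3,1),(4,1),(4,2),(5,2),(5,0)} : Set (Fin 6 × Fin 6)))


theorem shares_iff_of_isL (p q : BendPath) (hp : p.isL) (hq : q.isL) :
    SharesEdge p q ↔
      (p.x = q.x ∧ 0 < p.h ∧ 0 < q.h ∧ p.y < q.y + q.h ∧ q.y < p.y + p.h) ∨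
      (p.y = q.y ∧ 0 < p.w ∧ 0 < q.w ∧ p.x < q.x + q.w ∧ q.x < p.x + p.w) := by
  obtain ⟨hp1, hp2⟩ := hp
  obtain ⟨hq1, hq2⟩ := hq
  constructor
  · rintro ⟨e, he1, he2⟩
    rcases he1 with ⟨i, hi, rfl⟩ | ⟨i, hi, rfl⟩ <;>
      rcases he2 with ⟨j, hj, he⟩ | ⟨j, hj, he⟩ <;>
        simp [hp1, hp2, hq1, hq2, Prod.ext_iff] at he ⊢ <;> omega
  · rintro (⟨hx, hph, hqh, h1, h2⟩ | ⟨hy, hpw, hqw, h1, h2⟩)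
    · refine ⟨(true, p.x, max p.y q.y), Or.inl ⟨(max p.y q.y - p.y).toNat, by omega, ?_⟩,
        Or.inl ⟨(max p.y q.y - q.y).toNat, by omega, ?_⟩⟩ <;>
        simp [hp1, hq1, Prod.ext_iff, hx] <;> omega
    · refine ⟨(false, max p.x q.x, p.y), Or.inr ⟨(max p.x q.x - p.x).toNat, by omega, ?_⟩,
        Or.inr ⟨(max p.x q.x - q.x).toNat, by omega, ?_⟩⟩ <;>
        simp [hp2, hq2, Prod.ext_iff, hy] <;> omega


theorem triangleCommon (x0 x1 x2 y0 y1 y2 : ℤ) (h0 h1 h2 w0 w1 w2 : ℕ)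
    (a01 : (x0 = x1 ∧ 0 < h0 ∧ 0 < h1 ∧ y0 < y1 + h1 ∧ y1 < y0 + h0) ∨
           (y0 = y1 ∧ 0 < w0 ∧ 0 < w1 ∧ x0 < x1 + w1 ∧ x1 < x0 + w0))
    (a12 : (x1 = x2 ∧ 0 < h1 ∧ 0 < h2 ∧ y1 < y2 + h2 ∧ y2 < y1 + h1) ∨
           (y1 = y2 ∧ 0 < w1 ∧ 0 < w2 ∧ x1 < x2 + w2 ∧ x2 < x1 + w1))
    (a02 : (x0 = x2 ∧ 0 < h0 ∧ 0 < h2 ∧ y0 < y2 + h2 ∧ y2 < y0 + h0) ∨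
           (y0 = y2 ∧ 0 < w0 ∧ 0 < w2 ∧ x0 < x2 + w2 ∧ x2 < x0 + w0)) :
    (x0 = x1 ∧ x1 = x2 ∧ 0 < h0 ∧ 0 < h1 ∧ 0 < h2 ∧
      y0 < y1 + h1 ∧ y1 < y0 + h0 ∧ y1 < y2 + h2 ∧ y2 < y1 + h1 ∧ y0 < y2 + h2 ∧ y2 < y0 + h0) ∨
    (y0 = y1 ∧ y1 = y2 ∧ 0 < w0 ∧ 0 < w1 ∧ 0 < w2 ∧
      x0 < x1 + w1 ∧ x1 < x0 + w0 ∧ x1 < x2 + w2 ∧ x2 < x1 + w1 ∧ x0 < x2 + w2 ∧ x2 < x0 + w0) := by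
  omega


theorem classifyS (X Yi Yj Yk U V : ℤ) (Hi Hj Hk Wi Wj Wk G F : ℕ)
    (hi : 0 < Hi) (hj : 0 < Hj) (hk : 0 < Hk)
    (ai : (U = X ∧ 0 < G ∧ 0 < Hi ∧ V < Yi + Hi ∧ Yi < V + G) ∨
          (V = Yi ∧ 0 < F ∧ 0 < Wi ∧ U < X + Wi ∧ X < U + F))
    (aj : (U = X ∧ 0 < G ∧ 0 < Hj ∧ V < Yj + Hj ∧ Yj < V + G) ∨
          (V = Yj ∧ 0 < F ∧ 0 < Wj ∧ U < X + Wj ∧ X < U + F))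
    (nkv : ¬ (U = X ∧ 0 < G ∧ 0 < Hk ∧ V < Yk + Hk ∧ Yk < V + G))
    (nkh : ¬ (V = Yk ∧ 0 < F ∧ 0 < Wk ∧ U < X + Wk ∧ X < U + F)) :
    (Yi < Yk ∧ Yj < Yk) ∨
    (Yk + Hk < Yi + Hi ∧ Yk + Hk < Yj + Hj) ∨
    (Yi = Yj ∧ V = Yi ∧ 0 < F ∧ 0 < Wi ∧ 0 < Wj ∧ X < U + F ∧ U < X + Wi ∧ U < X + Wj ∧
      (Yk = Yi → Wk = 0 ∨ X + (Wk:ℤ) ≤ U)) := by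
  rcases ai with ai|ai <;> rcases aj with aj|aj <;> omega

theorem assembly (X Y0 Y1 Y2 U0 U1 U2 V0 V1 V2 : ℤ) (H0 H1 H2 W0 W1 W2 F0 F1 F2 : ℕ)
    (C0 : (Y0 < Y2 ∧ Y1 < Y2) ∨
          (Y2 + H2 < Y0 + H0 ∧ Y2 + H2 < Y1 + H1) ∨
          (Y0 = Y1 ∧ V0 = Y0 ∧ 0 < F0 ∧ 0 < W0 ∧ 0 < W1 ∧ X < U0 + F0 ∧ U0 < X + W0 ∧ U0 < X + W1 ∧
            (Y2 = Y0 → W2 = 0 ∨ X + (W2:ℤ) ≤ U0)))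
    (C1 : (Y1 < Y0 ∧ Y2 < Y0) ∨
          (Y0 + H0 < Y1 + H1 ∧ Y0 + H0 < Y2 + H2) ∨
          (Y1 = Y2 ∧ V1 = Y1 ∧ 0 < F1 ∧ 0 < W1 ∧ 0 < W2 ∧ X < U1 + F1 ∧ U1 < X + W1 ∧ U1 < X + W2 ∧
            (Y0 = Y1 → W0 = 0 ∨ X + (W0:ℤ) ≤ U1)))
    (C2 : (Y2 < Y1 ∧ Y0 < Y1) ∨
          (Y1 + H1 < Y2 + H2 ∧ Y1 + H1 < Y0 + H0) ∨
          (Y2 = Y0 ∧ V2 = Y2 ∧ 0 < F2 ∧ 0 < W2 ∧ 0 < W0 ∧ X < U2 + F2 ∧ U2 < X + W2 ∧ U2 < X + W0 ∧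
            (Y1 = Y2 → W1 = 0 ∨ X + (W1:ℤ) ≤ U2))) :
    False := by
  rcases C0 with C0|C0|C0 <;> rcases C1 with C1|C1|C1 <;> rcases C2 with C2|C2|C2 <;> omega


/-- The 3-sun has no [⌞]-representation. -/
theorem threeSun_not_L :
    ¬ ∃ P : Fin 6 → BendPath, (∀ v, (P v).isL) ∧ IsEPGRep ThreeSun P := by
  rintro ⟨P, hL, hrep⟩
  have h01 : SharesEdge (P 0) (P 1) := by
    refine (hrep 0 1 (by decide)).mp ?_
    simp [ThreeSun, SimpleGraph.fromRel_adj, Set.mem_insert_iff, Prod.ext_iff]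
  have h12 : SharesEdge (P 1) (P 2) := by
    refine (hrep 1 2 (by decide)).mp ?_
    simp [ThreeSun, SimpleGraph.fromRel_adj, Set.mem_insert_iff, Prod.ext_iff]
  have h02 : SharesEdge (P 0) (P 2) := by
    refine (hrep 0 2 (by decide)).mp ?_
    simp [ThreeSun, SimpleGraph.fromRel_adj, Set.mem_insert_iff, Prod.ext_iff]
  have h30 : SharesEdge (P 3) (P 0) := by
    refine (hrep 3 0 (by decide)).mp ?_
    simp [ThreeSun, SimpleGraph.fromRel_adj, Set.mem_insert_iff, Prod.ext_iff]
  have h31 : SharesEdge (P 3) (P 1) := by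
    refine (hrep 3 1 (by decide)).mp ?_
    simp [ThreeSun, SimpleGraph.fromRel_adj, Set.mem_insert_iff, Prod.ext_iff]
  have h41 : SharesEdge (P 4) (P 1) := by
    refine (hrep 4 1 (by decide)).mp ?_
    simp [ThreeSun, SimpleGraph.fromRel_adj, Set.mem_insert_iff, Prod.ext_iff]
  have h42 : SharesEdge (P 4) (P 2) := by
    refine (hrep 4 2 (by decide)).mp ?_
    simp [ThreeSun, SimpleGraph.fromRel_adj, Set.mem_insert_iff, Prod.ext_iff]
  have h52 : SharesEdge (P 5) (P 2) := by
    refine (hrep 5 2 (by decide)).mp ?_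
    simp [ThreeSun, SimpleGraph.fromRel_adj, Set.mem_insert_iff, Prod.ext_iff]
  have h50 : SharesEdge (P 5) (P 0) := by
    refine (hrep 5 0 (by decide)).mp ?_
    simp [ThreeSun, SimpleGraph.fromRel_adj, Set.mem_insert_iff, Prod.ext_iff]
  have h32 : ¬ SharesEdge (P 3) (P 2) := by
    intro hs
    exact (by simp [ThreeSun, SimpleGraph.fromRel_adj, Set.mem_insert_iff, Prod.ext_iff] :
      ¬ ThreeSun.Adj 3 2) ((hrep 3 2 (by decide)).mpr hs)
  have h40 : ¬ SharesEdge (P 4) (P 0) := by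
    intro hs
    exact (by simp [ThreeSun, SimpleGraph.fromRel_adj, Set.mem_insert_iff, Prod.ext_iff] :
      ¬ ThreeSun.Adj 4 0) ((hrep 4 0 (by decide)).mpr hs)
  have h51 : ¬ SharesEdge (P 5) (P 1) := by
    intro hs
    exact (by simp [ThreeSun, SimpleGraph.fromRel_adj, Set.mem_insert_iff, Prod.ext_iff] :
      ¬ ThreeSun.Adj 5 1) ((hrep 5 1 (by decide)).mpr hs)
  rw [shares_iff_of_isL _ _ (hL _) (hL _)] at h01 h12 h02 h30 h31 h41 h42 h52 h50 h32 h40 h51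
  rw [not_or] at h32 h40 h51
  obtain ⟨n32v, n32h⟩ := h32
  obtain ⟨n40v, n40h⟩ := h40
  obtain ⟨n51v, n51h⟩ := h51
  rcases triangleCommon _ _ _ _ _ _ _ _ _ _ _ _ h01 h12 h02 with
    ⟨e1, e2, hh0, hh1, hh2, -, -, -, -, -, -⟩ | ⟨e1, e2, hh0, hh1, hh2, -, -, -, -, -, -⟩
  · have e2' : (P 0).x = (P 2).x := e1.trans e2
    rw [← e1] at h31 h41 n51v n51h
    rw [← e2'] at h42 h52 n32v n32h
    exact assembly (P 0).x (P 0).y (P 1).y (P 2).y (P 3).x (P 4).x (P 5).x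
      (P 3).y (P 4).y (P 5).y (P 0).h (P 1).h (P 2).h (P 0).w (P 1).w (P 2).w
      (P 3).w (P 4).w (P 5).w
      (classifyS (P 0).x (P 0).y (P 1).y (P 2).y (P 3).x (P 3).y
        (P 0).h (P 1).h (P 2).h (P 0).w (P 1).w (P 2).w (P 3).h (P 3).w
        hh0 hh1 hh2 h30 h31 n32v n32h)
      (classifyS (P 0).x (P 1).y (P 2).y (P 0).y (P 4).x (P 4).y
        (P 1).h (P 2).h (P 0).h (P 1).w (P 2).w (P 0).w (P 4).h (P 4).w
        hh1 hh2 hh0 h41 h42 n40v n40h)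
      (classifyS (P 0).x (P 2).y (P 0).y (P 1).y (P 5).x (P 5).y
        (P 2).h (P 0).h (P 1).h (P 2).w (P 0).w (P 1).w (P 5).h (P 5).w
        hh2 hh0 hh1 h52 h50 n51v n51h)
  · have e2' : (P 0).y = (P 2).y := e1.trans e2
    rw [← e1] at h31 h41 n51v n51h
    rw [← e2'] at h42 h52 n32v n32h
    exact assembly (P 0).y (P 0).x (P 1).x (P 2).x (P 3).y (P 4).y (P 5).y
      (P 3).x (P 4).x (P 5).x (P 0).w (P 1).w (P 2).w (P 0).h (P 1).h (P 2).h
      (P 3).h (P 4).h (P 5).h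
      (classifyS (P 0).y (P 0).x (P 1).x (P 2).x (P 3).y (P 3).x
        (P 0).w (P 1).w (P 2).w (P 0).h (P 1).h (P 2).h (P 3).w (P 3).h
        hh0 hh1 hh2 h30.symm h31.symm n32h n32v)
      (classifyS (P 0).y (P 1).x (P 2).x (P 0).x (P 4).y (P 4).x
        (P 1).w (P 2).w (P 0).w (P 1).h (P 2).h (P 0).h (P 4).w (P 4).h
        hh1 hh2 hh0 h41.symm h42.symm n40h n40v)
      (classifyS (P 0).y (P 2).x (P 0).x (P 1).x (P 5).y (P 5).x
        (P 2).w (P 0).w (P 1).w (P 2).h (P 0).h (P 1).h (P 5).w (P 5).h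
        hh2 hh0 hh1 h52.symm h50.symm n51h n51v)
end
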